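/- arXiv:1605.01145 — 4 statements merged into one kernel-verified Lean document; each statement's English description precedes it below -/
import Mathlib

section
/- For |q| < 1, one has η(q)^2 / η(q^2) = θ₄(q), i.e. q^{1/12} ∏_{n≥1}(1-q^n)^2 / (q^{1/12} ∏_{n≥1}(1-q^{2n})) = ∑_{n∈ℤ} (-1)^n q^{n^2}. -/
/-- Dedekind eta function η(q) = q^(1/24) ∏_{n≥1} (1 - q^n), for 0 < q < 1. -/
noncomputable def eta (q : ℝ) : ℝ := q ^ ((1 : ℝ)/24) * ∏' n : ℕ, (1 - q ^ (n + 1))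
/-- Jacobi theta function θ₂(q) = ∑_{n∈ℤ} q^((n+1/2)²), for 0 < q < 1 (real powers). -/
noncomputable def theta2 (q : ℝ) : ℝ := ∑' n : ℤ, q ^ (((n : ℝ) + 1/2) ^ 2)

/-- Jacobi theta function θ₃(q) = ∑_{n∈ℤ} q^(n²). -/
noncomputable def theta3 (q : ℝ) : ℝ := ∑' n : ℤ, q ^ ((n : ℝ) ^ 2)

/-- Jacobi theta function θ₄(q) = ∑_{n∈ℤ} (-1)^n q^(n²). -/
noncomputable def theta4 (q : ℝ) : ℝ := ∑' n : ℤ, (-1 : ℝ) ^ n * q ^ ((n : ℝ) ^ 2)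

/-!
By two applications of the q-Pascal rule, the finite sums
`T_n = ∑_k (-1)^k q^(k²) [2n choose n+k]_(q²)` satisfy `T_(n+1) = (1 - q^(2n+1))² T_n`, so
`T_n = (q; q²)_n²`. As `n → ∞` each Gaussian binomial tends to `1 / (q²; q²)_∞`, and dominated
convergence gives Gauss's identity `θ₄(q) = (q; q²)_∞² (q²; q²)_∞`. Since
`(q; q)_∞ = (q; q²)_∞ (q²; q²)_∞`, this is `η(q)² / η(q²)`.
-/

open Finset Filter Topology

section GaussBinom

variable {K : Type*} [Field K] {Q : K}

/-- `(Q; Q)_m` in q-Pochhammer notation. -/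
def qPochhammer (Q : K) (m : ℕ) : K := ∏ j ∈ range m, (1 - Q ^ (j + 1))

/-- The Gaussian binomial coefficient `[u + v choose u]_Q`, extended by zero to negative `u` or
`v`. -/
noncomputable def gaussBinom (Q : K) (u v : ℤ) : K :=
  if 0 ≤ u ∧ 0 ≤ v then
    qPochhammer Q (u + v).toNat / (qPochhammer Q u.toNat * qPochhammer Q v.toNat)
  else 0

@[simp] lemma qPochhammer_zero (Q : K) : qPochhammer Q 0 = 1 := prod_range_zero _

lemma qPochhammer_succ (Q : K) (m : ℕ) :
    qPochhammer Q (m + 1) = qPochhammer Q m * (1 - Q ^ (m + 1)) :=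
  prod_range_succ _ m

lemma qPochhammer_ne_zero (hQ : ∀ j : ℕ, Q ^ (j + 1) ≠ 1) (m : ℕ) : qPochhammer Q m ≠ 0 :=
  prod_ne_zero_iff.2 fun j _ => sub_ne_zero.2 (hQ j).symm

lemma gaussBinom_comm (Q : K) (u v : ℤ) : gaussBinom Q u v = gaussBinom Q v u := by
  simp only [gaussBinom, and_comm, add_comm u, mul_comm (qPochhammer Q u.toNat)]

lemma gaussBinom_natCast (Q : K) (a b : ℕ) :
    gaussBinom Q a b = qPochhammer Q (a + b) / (qPochhammer Q a * qPochhammer Q b) := by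
  rw [gaussBinom, if_pos ⟨a.cast_nonneg, b.cast_nonneg⟩, ← Nat.cast_add, Int.toNat_natCast,
    Int.toNat_natCast, Int.toNat_natCast]

lemma gaussBinom_of_neg {u v : ℤ} (h : u < 0 ∨ v < 0) : gaussBinom Q u v = 0 :=
  if_neg (by omega)

lemma gaussBinom_zero_left {v : ℤ} (hQ : ∀ j : ℕ, Q ^ (j + 1) ≠ 1) (hv : 0 ≤ v) :
    gaussBinom Q 0 v = 1 := by
  lift v to ℕ using hv
  rw [← Nat.cast_zero, gaussBinom_natCast, zero_add, qPochhammer_zero, one_mul,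
    div_self (qPochhammer_ne_zero hQ v)]

lemma gaussBinom_pascal (hQ : ∀ j : ℕ, Q ^ (j + 1) ≠ 1) {u v : ℤ} (huv : u ≠ 0 ∨ v ≠ 0) :
    gaussBinom Q u v = gaussBinom Q (u - 1) v + Q ^ u * gaussBinom Q u (v - 1) := by
  rcases lt_or_ge u 0 with hu | hu
  · simp [gaussBinom_of_neg (Or.inl hu), gaussBinom_of_neg (Or.inl (by omega : u - 1 < 0))]
  rcases lt_or_ge v 0 with hv | hv
  · simp [gaussBinom_of_neg (Or.inr hv), gaussBinom_of_neg (Or.inr (by omega : v - 1 < 0))]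
  rcases hu.eq_or_lt with rfl | hu₀
  · rw [gaussBinom_zero_left hQ hv, gaussBinom_zero_left hQ (by omega),
      gaussBinom_of_neg (by omega), zpow_zero, zero_add, one_mul]
  rcases hv.eq_or_lt with rfl | hv₀
  · rw [gaussBinom_comm, gaussBinom_zero_left hQ hu, gaussBinom_comm,
      gaussBinom_zero_left hQ (by omega), gaussBinom_of_neg (by omega), mul_zero, add_zero]
  obtain ⟨a, rfl⟩ : ∃ a : ℕ, u = a + 1 := ⟨(u - 1).toNat, by omega⟩
  obtain ⟨b, rfl⟩ : ∃ b : ℕ, v = b + 1 := ⟨(v - 1).toNat, by omega⟩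
  have h₁ := gaussBinom_natCast Q (a + 1) (b + 1)
  have h₂ := gaussBinom_natCast Q a (b + 1)
  have h₃ := gaussBinom_natCast Q (a + 1) b
  push_cast at h₁ h₂ h₃
  rw [add_sub_cancel_right, add_sub_cancel_right, h₁, h₂, h₃, ← Nat.cast_succ, zpow_natCast,
    (by omega : a + 1 + (b + 1) = a + b + 1 + 1), (by omega : a + (b + 1) = a + b + 1),
    (by omega : a + 1 + b = a + b + 1)]
  simp only [qPochhammer_succ]
  have hP := qPochhammer_ne_zero hQ
  have ha : 1 - Q ^ (a + 1) ≠ 0 := sub_ne_zero.2 (hQ a).symm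
  have hb : 1 - Q ^ (b + 1) ≠ 0 := sub_ne_zero.2 (hQ b).symm
  field_simp
  ring

lemma gaussBinom_pascal' (hQ : ∀ j : ℕ, Q ^ (j + 1) ≠ 1) {u v : ℤ} (huv : u ≠ 0 ∨ v ≠ 0) :
    gaussBinom Q u v = gaussBinom Q u (v - 1) + Q ^ v * gaussBinom Q (u - 1) v := by
  rw [gaussBinom_comm, gaussBinom_pascal hQ huv.symm, gaussBinom_comm, gaussBinom_comm Q v]

/-- Two steps of the q-Pascal rule, one on each side of the triangle. -/
lemma gaussBinom_add_one_add_one (hQ : ∀ j : ℕ, Q ^ (j + 1) ≠ 1) {u v : ℤ} (huv : 0 ≤ u + v) :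
    gaussBinom Q (u + 1) (v + 1) = (1 + Q ^ (u + v + 1)) * gaussBinom Q u v
      + Q ^ (u + 1) * gaussBinom Q (u + 1) (v - 1)
      + Q ^ (v + 1) * gaussBinom Q (u - 1) (v + 1) := by
  rw [gaussBinom_pascal hQ (by omega), add_sub_cancel_right, add_sub_cancel_right,
    gaussBinom_pascal' hQ (u := u) (by omega), gaussBinom_pascal' hQ (u := u + 1) (by omega),
    add_sub_cancel_right, add_sub_cancel_right,
    show u + v + 1 = (u + 1) + v by ring, zpow_add' (m := u + 1) (Or.inr (Or.inl (by omega)))]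
  ring

end GaussBinom

section FiniteGauss

variable {K : Type*} [Field K] {q : K}

noncomputable def gaussSummand (q : K) (n : ℕ) (k : ℤ) : K :=
  (-1) ^ k * q ^ (k ^ 2) * gaussBinom (q ^ 2) (n - k) (n + k)

lemma gaussSummand_eq_zero {n : ℕ} {k : ℤ} (h : (n : ℤ) < |k|) : gaussSummand q n k = 0 := by
  rw [gaussSummand, gaussBinom_of_neg (by cases abs_cases k <;> omega), mul_zero]

lemma hasFiniteSupport_gaussSummand (q : K) (n : ℕ) :
    Function.HasFiniteSupport (gaussSummand q n) :=
  (Set.finite_Icc (-(n : ℤ)) n).subset fun k hk => by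
    by_contra h
    exact hk (gaussSummand_eq_zero (by rw [Set.mem_Icc] at h; cases abs_cases k <;> omega))

lemma gaussSummand_succ (hq₀ : q ≠ 0) (hq : ∀ j : ℕ, (q ^ 2) ^ (j + 1) ≠ 1) (n : ℕ) (k : ℤ) :
    gaussSummand q (n + 1) k = (1 + q ^ (4 * n + 2)) * gaussSummand q n k
      - q ^ (2 * n + 1) * gaussSummand q n (k - 1)
      - q ^ (2 * n + 1) * gaussSummand q n (k + 1) := by
  have hrec := gaussBinom_add_one_add_one hq (u := n - k) (v := n + k) (by omega)
  have hzpow : ∀ a b c d : ℤ, a + 2 * b = c + d → q ^ a * (q ^ 2) ^ b = q ^ c * q ^ d := by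
    intro a b c d h
    rw [← zpow_natCast, ← zpow_mul, ← zpow_add₀ hq₀, ← zpow_add₀ hq₀]
    push_cast
    rw [h]
  have e₀ : (q ^ 2) ^ ((n : ℤ) - k + (n + k) + 1) = q ^ (4 * n + 2) := by
    rw [show (n : ℤ) - k + (n + k) + 1 = (2 * n + 1 : ℕ) by push_cast; ring, zpow_natCast,
      ← pow_mul]
    ring_nf
  have e₁ := hzpow (k ^ 2) ((n : ℤ) - k + 1) (2 * n + 1 : ℕ) ((k - 1) ^ 2) (by push_cast; ring)
  have e₂ := hzpow (k ^ 2) ((n : ℤ) + k + 1) (2 * n + 1 : ℕ) ((k + 1) ^ 2) (by push_cast; ring)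
  have s₁ : (-1 : K) ^ (k - 1) = -(-1) ^ k := by rw [zpow_sub_one₀ (by norm_num)]; simp
  have s₂ : (-1 : K) ^ (k + 1) = -(-1) ^ k := by rw [zpow_add_one₀ (by norm_num)]; simp
  simp only [gaussSummand]
  rw [show ((n + 1 : ℕ) : ℤ) - k = n - k + 1 by push_cast; ring,
    show ((n + 1 : ℕ) : ℤ) + k = n + k + 1 by push_cast; ring, hrec, e₀, s₁, s₂,
    show (n : ℤ) - (k - 1) = n - k + 1 by ring, show (n : ℤ) + (k - 1) = n + k - 1 by ring,
    show (n : ℤ) - (k + 1) = n - k - 1 by ring, show (n : ℤ) + (k + 1) = n + k + 1 by ring]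
  rw [zpow_natCast] at e₁ e₂
  linear_combination (-1 : K) ^ k * gaussBinom (q ^ 2) (n - k + 1) (n + k - 1) * e₁
    + (-1 : K) ^ k * gaussBinom (q ^ 2) (n - k - 1) (n + k + 1) * e₂

/-- A finite form of Gauss's identity `θ₄(q) = (q; q²)_∞² (q²; q²)_∞`. -/
theorem finsum_gaussSummand (hq₀ : q ≠ 0) (hq : ∀ j : ℕ, (q ^ 2) ^ (j + 1) ≠ 1) (n : ℕ) :
    ∑ᶠ k, gaussSummand q n k = ∏ j ∈ range n, (1 - q ^ (2 * j + 1)) ^ 2 := by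
  induction n with
  | zero =>
    rw [finsum_eq_single _ 0 fun k hk => gaussSummand_eq_zero (by simpa using hk)]
    simp [gaussSummand, gaussBinom_zero_left hq]
  | succ n ih =>
    have hf := hasFiniteSupport_gaussSummand q n
    have hf' : ∀ c : ℤ, Function.HasFiniteSupport fun k => gaussSummand q n (k + c) :=
      fun c => hf.comp_of_injective (add_left_injective c)
    have hl := hf' (-1)
    have hr := hf' 1
    have hshift : ∀ c : ℤ, ∑ᶠ k, gaussSummand q n (k + c) = ∑ᶠ k, gaussSummand q n k :=
      fun c => finsum_comp_equiv (Equiv.addRight c)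
    calc ∑ᶠ k, gaussSummand q (n + 1) k
        = ∑ᶠ k, ((1 + q ^ (4 * n + 2)) * gaussSummand q n k
            - q ^ (2 * n + 1) * gaussSummand q n (k + -1)
            - q ^ (2 * n + 1) * gaussSummand q n (k + 1)) :=
          finsum_congr fun k => gaussSummand_succ hq₀ hq n k
      _ = (1 + q ^ (4 * n + 2)) * ∑ᶠ k, gaussSummand q n k
            - q ^ (2 * n + 1) * ∑ᶠ k, gaussSummand q n (k + -1)
            - q ^ (2 * n + 1) * ∑ᶠ k, gaussSummand q n (k + 1) := by
          rw [finsum_sub_distrib, finsum_sub_distrib, mul_finsum, mul_finsum, mul_finsum]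
          all_goals fun_prop
      _ = (1 - q ^ (2 * n + 1)) ^ 2 * ∑ᶠ k, gaussSummand q n k := by
          rw [hshift, hshift]; ring
      _ = _ := by rw [ih, prod_range_succ]; ring

end FiniteGauss


lemma multipliable_one_sub_of_summable {ι : Type*} {g : ι → ℝ} (hg : Summable g) :
    Multipliable fun i => 1 - g i := by
  simpa [sub_eq_add_neg] using Real.multipliable_one_add_of_summable hg.neg

lemma tprod_one_sub_pos_of_summable {ι : Type*} {g : ι → ℝ} (hg : Summable g)
    (hg₁ : ∀ i, g i < 1) : 0 < ∏' i, (1 - g i) := by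
  rw [← Real.rexp_tsum_eq_tprod (fun i => sub_pos.2 (hg₁ i))
    (by simpa [sub_eq_add_neg] using Real.summable_log_one_add_of_summable hg.neg)]
  exact Real.exp_pos _

section EulerFunction

variable {Q : ℝ}

lemma summable_pow_succ (hQ₀ : 0 ≤ Q) (hQ₁ : Q < 1) : Summable fun j : ℕ => Q ^ (j + 1) :=
  (summable_nat_add_iff 1).2 (summable_geometric_of_lt_one hQ₀ hQ₁)

lemma tprod_one_sub_pow_succ_pos (hQ₀ : 0 ≤ Q) (hQ₁ : Q < 1) :
    0 < ∏' j : ℕ, (1 - Q ^ (j + 1)) :=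
  tprod_one_sub_pos_of_summable (summable_pow_succ hQ₀ hQ₁) fun j => pow_lt_one₀ hQ₀ hQ₁ (by omega)

lemma multipliable_one_sub_pow_succ (hQ₀ : 0 ≤ Q) (hQ₁ : Q < 1) :
    Multipliable fun j : ℕ => 1 - Q ^ (j + 1) :=
  multipliable_one_sub_of_summable (summable_pow_succ hQ₀ hQ₁)

lemma multipliable_one_sub_pow_two_mul_add_one (hQ₀ : 0 ≤ Q) (hQ₁ : Q < 1) :
    Multipliable fun j : ℕ => 1 - Q ^ (2 * j + 1) :=
  multipliable_one_sub_of_summable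
    (((summable_geometric_of_lt_one (sq_nonneg Q) (pow_lt_one₀ hQ₀ hQ₁ two_ne_zero)).mul_left
      Q).congr fun j => by ring)

lemma tendsto_qPochhammer (hQ₀ : 0 ≤ Q) (hQ₁ : Q < 1) :
    Tendsto (qPochhammer Q) atTop (𝓝 (∏' j : ℕ, (1 - Q ^ (j + 1)))) :=
  (multipliable_one_sub_pow_succ hQ₀ hQ₁).hasProd.tendsto_prod_nat

lemma qPochhammer_pos (hQ₀ : 0 ≤ Q) (hQ₁ : Q < 1) (m : ℕ) : 0 < qPochhammer Q m :=
  prod_pos fun j _ => sub_pos.2 (pow_lt_one₀ hQ₀ hQ₁ (by omega))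

lemma qPochhammer_le_one (hQ₀ : 0 ≤ Q) (hQ₁ : Q < 1) (m : ℕ) : qPochhammer Q m ≤ 1 :=
  prod_le_one (fun _ _ => sub_nonneg.2 (pow_le_one₀ hQ₀ hQ₁.le))
    fun _ _ => sub_le_self _ (pow_nonneg hQ₀ _)

lemma qPochhammer_antitone (hQ₀ : 0 ≤ Q) (hQ₁ : Q < 1) : Antitone (qPochhammer Q) :=
  antitone_nat_of_succ_le fun m => by
    rw [qPochhammer_succ]
    exact mul_le_of_le_one_right (qPochhammer_pos hQ₀ hQ₁ m).le
      (sub_le_self _ (pow_nonneg hQ₀ _))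

lemma tprod_le_qPochhammer (hQ₀ : 0 ≤ Q) (hQ₁ : Q < 1) (m : ℕ) :
    ∏' j : ℕ, (1 - Q ^ (j + 1)) ≤ qPochhammer Q m :=
  (qPochhammer_antitone hQ₀ hQ₁).le_of_tendsto (tendsto_qPochhammer hQ₀ hQ₁) m

lemma gaussBinom_nonneg (hQ₀ : 0 ≤ Q) (hQ₁ : Q < 1) (u v : ℤ) : 0 ≤ gaussBinom Q u v := by
  unfold gaussBinom
  split_ifs
  · exact div_nonneg (qPochhammer_pos hQ₀ hQ₁ _).le
      (mul_nonneg (qPochhammer_pos hQ₀ hQ₁ _).le (qPochhammer_pos hQ₀ hQ₁ _).le)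
  · exact le_rfl

lemma gaussBinom_le (hQ₀ : 0 ≤ Q) (hQ₁ : Q < 1) (u v : ℤ) :
    gaussBinom Q u v ≤ ((∏' j : ℕ, (1 - Q ^ (j + 1))) ^ 2)⁻¹ := by
  have hE := tprod_one_sub_pow_succ_pos hQ₀ hQ₁
  unfold gaussBinom
  split_ifs
  · rw [← one_div, sq]
    exact div_le_div₀ zero_le_one (qPochhammer_le_one hQ₀ hQ₁ _) (by positivity)
      (mul_le_mul (tprod_le_qPochhammer hQ₀ hQ₁ _) (tprod_le_qPochhammer hQ₀ hQ₁ _) hE.le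
        (qPochhammer_pos hQ₀ hQ₁ _).le)
  · positivity

lemma tendsto_gaussBinom (hQ₀ : 0 ≤ Q) (hQ₁ : Q < 1) (k : ℤ) :
    Tendsto (fun n : ℕ => gaussBinom Q (n - k) (n + k)) atTop
      (𝓝 (∏' j : ℕ, (1 - Q ^ (j + 1)))⁻¹) := by
  set E := ∏' j : ℕ, (1 - Q ^ (j + 1))
  have hE := (tprod_one_sub_pow_succ_pos hQ₀ hQ₁).ne'
  have hP := tendsto_qPochhammer hQ₀ hQ₁
  have hidx : ∀ c : ℤ, Tendsto (fun n : ℕ => ((n : ℤ) + c).toNat) atTop atTop := fun c =>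
    tendsto_atTop_atTop.2 fun b => ⟨b + c.natAbs, fun n hn => by omega⟩
  have hlim : Tendsto (fun n : ℕ => qPochhammer Q ((n : ℤ) + n).toNat /
      (qPochhammer Q ((n : ℤ) + -k).toNat * qPochhammer Q ((n : ℤ) + k).toNat)) atTop
      (𝓝 (E / (E * E))) :=
    (hP.comp (tendsto_atTop_atTop.2 fun b => ⟨b, fun n hn => by omega⟩)).div
      ((hP.comp (hidx (-k))).mul (hP.comp (hidx k))) (mul_ne_zero hE hE)
  rw [div_mul_cancel_left₀ hE] at hlim
  refine hlim.congr' ?_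
  filter_upwards [eventually_ge_atTop k.natAbs] with n hn
  rw [gaussBinom, if_pos (by omega)]
  congr 3
  omega

end EulerFunction

section Gauss

variable {q : ℝ}

lemma summable_zpow_sq (hq₀ : 0 ≤ q) (hq₁ : q < 1) : Summable fun k : ℤ => q ^ (k ^ 2) := by
  have hnat : Summable fun n : ℕ => q ^ ((n : ℤ) ^ 2) := by
    refine (summable_geometric_of_lt_one hq₀ hq₁).of_nonneg_of_le (fun n => by positivity)
      fun n => ?_
    rw [← Nat.cast_pow, zpow_natCast]
    exact pow_le_pow_of_le_one hq₀ hq₁.le (Nat.le_self_pow two_ne_zero n)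
  exact .of_nat_of_neg hnat (by simpa using hnat)

lemma tendsto_finsum_gaussSummand (hq₀ : 0 ≤ q) (hq₁ : q < 1) :
    Tendsto (fun n => ∑ᶠ k, gaussSummand q n k) atTop
      (𝓝 ((∑' k : ℤ, (-1) ^ k * q ^ (k ^ 2)) * (∏' j : ℕ, (1 - (q ^ 2) ^ (j + 1)))⁻¹)) := by
  have hQ₀ : 0 ≤ q ^ 2 := sq_nonneg q
  have hQ₁ : q ^ 2 < 1 := pow_lt_one₀ hq₀ hq₁ two_ne_zero
  have hfin : (fun n => ∑ᶠ k, gaussSummand q n k) = fun n => ∑' k, gaussSummand q n k :=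
    funext fun n => (tsum_eq_finsum (hasFiniteSupport_gaussSummand q n)).symm
  rw [hfin, ← tsum_mul_right]
  refine tendsto_tsum_of_dominated_convergence
    ((summable_zpow_sq hq₀ hq₁).mul_right ((∏' j : ℕ, (1 - (q ^ 2) ^ (j + 1))) ^ 2)⁻¹)
    (fun k => (tendsto_gaussBinom hQ₀ hQ₁ k).const_mul ((-1) ^ k * q ^ (k ^ 2)))
    (Eventually.of_forall fun n k => ?_)
  rw [gaussSummand, norm_mul, norm_mul, norm_zpow, norm_neg, norm_one, one_zpow, one_mul,
    Real.norm_of_nonneg (zpow_nonneg hq₀ _),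
    Real.norm_of_nonneg (gaussBinom_nonneg hQ₀ hQ₁ _ _)]
  exact mul_le_mul_of_nonneg_left (gaussBinom_le hQ₀ hQ₁ _ _) (zpow_nonneg hq₀ _)

/-- Gauss's identity, the case `z = -1` of the Jacobi triple product. -/
theorem tsum_neg_one_zpow_mul_zpow_sq (hq₀ : 0 < q) (hq₁ : q < 1) :
    ∑' k : ℤ, (-1) ^ k * q ^ (k ^ 2)
      = (∏' j : ℕ, (1 - q ^ (2 * j + 1))) ^ 2 * ∏' j : ℕ, (1 - (q ^ 2) ^ (j + 1)) := by
  have hQ₁ : q ^ 2 < 1 := pow_lt_one₀ hq₀.le hq₁ two_ne_zero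
  have hE := tprod_one_sub_pow_succ_pos (sq_nonneg q) hQ₁
  have hq : ∀ j : ℕ, (q ^ 2) ^ (j + 1) ≠ 1 := fun j => (pow_lt_one₀ (sq_nonneg q) hQ₁ (by omega)).ne
  have hodd : Tendsto (fun n => ∏ j ∈ range n, (1 - q ^ (2 * j + 1)) ^ 2) atTop
      (𝓝 ((∏' j : ℕ, (1 - q ^ (2 * j + 1))) ^ 2)) := by
    simpa only [prod_pow] using
      ((multipliable_one_sub_pow_two_mul_add_one hq₀.le hq₁).hasProd.tendsto_prod_nat).pow 2
  have hlim := tendsto_nhds_unique (tendsto_finsum_gaussSummand hq₀.le hq₁)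
    (hodd.congr fun n => (finsum_gaussSummand hq₀.ne' hq n).symm)
  rw [← hlim, inv_mul_cancel_right₀ hE.ne']

lemma tprod_one_sub_pow_succ_eq_mul (hq₀ : 0 ≤ q) (hq₁ : q < 1) :
    ∏' n : ℕ, (1 - q ^ (n + 1))
      = (∏' j : ℕ, (1 - q ^ (2 * j + 1))) * ∏' j : ℕ, (1 - (q ^ 2) ^ (j + 1)) := by
  have heven := multipliable_one_sub_pow_succ (sq_nonneg q) (pow_lt_one₀ hq₀ hq₁ two_ne_zero)
  simp only [← pow_mul] at heven ⊢
  exact (tprod_even_mul_odd (f := fun n => 1 - q ^ (n + 1))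
    (multipliable_one_sub_pow_two_mul_add_one hq₀ hq₁) heven).symm

end Gauss

theorem stmt1 (q : ℝ) (hq0 : 0 < q) (hq1 : q < 1) :
    eta q ^ 2 / eta (q ^ 2) = theta4 q := by
  have htheta : theta4 q = ∑' k : ℤ, (-1) ^ k * q ^ (k ^ 2) :=
    tsum_congr fun k => by rw [← Int.cast_pow, Real.rpow_intCast]
  unfold eta
  rw [htheta, tsum_neg_one_zpow_mul_zpow_sq hq0 hq1, mul_pow,
    tprod_one_sub_pow_succ_eq_mul hq0.le hq1, Real.rpow_pow_comm hq0.le]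
  field_simp
end

section
/- For |q| < 1, one has 2 ∑_{n=0}^∞ (-1)^n (2n+1) q^{(2n+1)^2} = θ₂(q^4) θ₃(q^4) θ₄(q^4). -/
namespace Jacobi3

open Real Filter Function

/-! ### Integer-valued weights -/

def WZ (x : ℤ) : ℤ := if x % 4 = 1 then x else if x % 4 = 3 then -x else 0
def OZ (z : ℤ) : ℤ := if z % 2 = 0 then 0 else 1
def epsZ (b : ℤ) : ℤ := if b % 2 = 0 then 1 else -1
def GZ (X Z : ℤ) : ℤ := if (X - Z) % 4 = 0 then WZ ((X + Z) / 2) * epsZ ((X - Z) / 4) else 0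

lemma WZ_neg (x : ℤ) : WZ (-x) = WZ x := by
  simp only [WZ]; split_ifs <;> omega

lemma WZ_even {x : ℤ} (h : x % 2 = 0) : WZ x = 0 := by
  simp only [WZ]; split_ifs <;> omega

lemma WZ_abs_le (x : ℤ) : |WZ x| ≤ |x| := by
  simp only [WZ]; split_ifs <;> simp [abs_neg]

lemma epsZ_neg (b : ℤ) : epsZ (-b) = epsZ b := by
  simp only [epsZ]; split_ifs <;> omega

lemma epsZ_abs (b : ℤ) : |epsZ b| = 1 := by
  simp only [epsZ]; split_ifs <;> simp

lemma GZ_abs_le (X Z : ℤ) : |GZ X Z| ≤ (|X| + 3) * (|Z| + 3) := by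
  have h1 : (0:ℤ) ≤ |X| := abs_nonneg X
  have h2 : (0:ℤ) ≤ |Z| := abs_nonneg Z
  have hX1 : X ≤ |X| := le_abs_self X
  have hX2 : -|X| ≤ X := neg_abs_le X
  have hZ1 : Z ≤ |Z| := le_abs_self Z
  have hZ2 : -|Z| ≤ Z := neg_abs_le Z
  simp only [GZ]
  split_ifs with h
  · have he := epsZ_abs ((X - Z) / 4)
    rw [abs_mul, he, mul_one]
    have hd : |(X + Z) / 2| ≤ |X| + |Z| := by
      rw [abs_le]; omega
    have := WZ_abs_le ((X + Z) / 2)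
    nlinarith
  · simp only [abs_zero]; nlinarith

/-- The core combinatorial lemma. -/
lemma CL {y : ℤ} (b : ℤ) (hy : y % 2 = 1) :
    WZ (y + 2*b) + WZ (y - 2*b) = 2 * (WZ y * epsZ b) := by
  simp only [WZ, epsZ]; split_ifs <;> omega

lemma GZ_even {x z : ℤ} (hx : x % 2 = 0) (hz : z % 2 = 0) : GZ x z = 0 := by
  simp only [GZ]
  split_ifs with h
  · rw [WZ_even (by omega), zero_mul]
  · rfl

lemma GZ_mixed {x z : ℤ} (h : x % 2 ≠ z % 2) : GZ x z = 0 := by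
  simp only [GZ]
  rw [if_neg (by omega)]

/-- The pointwise identity at the heart of Key1. -/
lemma PWZ (x z : ℤ) :
    WZ x * OZ z + WZ z * OZ x = GZ x z + GZ x (-z) + GZ z x + GZ z (-x) := by
  rcases Int.emod_two_eq x with hx | hx <;> rcases Int.emod_two_eq z with hz | hz
  · rw [GZ_even hx hz, GZ_even hx (by omega : (-z) % 2 = 0),
      GZ_even hz hx, GZ_even hz (by omega : (-x) % 2 = 0), WZ_even hx, WZ_even hz]
    ring
  · rw [GZ_mixed (by omega), GZ_mixed (by omega), GZ_mixed (by omega), GZ_mixed (by omega),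
      WZ_even hx]
    have hOx : OZ x = 0 := by simp only [OZ, if_pos hx]
    rw [hOx]; ring
  · rw [GZ_mixed (by omega), GZ_mixed (by omega), GZ_mixed (by omega), GZ_mixed (by omega),
      WZ_even hz]
    have hOz : OZ z = 0 := by simp only [OZ, if_pos hz]
    rw [hOz]; ring
  · have hOx : OZ x = 1 := by simp only [OZ]; rw [if_neg (by omega)]
    have hOz : OZ z = 1 := by simp only [OZ]; rw [if_neg (by omega)]
    rw [hOx, hOz, mul_one, mul_one]
    rcases (by omega : (x - z) % 4 = 0 ∨ (x + z) % 4 = 0) with h4 | h4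
    · have e1 : GZ x (-z) = 0 := by simp only [GZ]; rw [if_neg (by omega)]
      have e2 : GZ z (-x) = 0 := by simp only [GZ]; rw [if_neg (by omega)]
      have e3 : GZ x z = WZ ((x+z)/2) * epsZ ((x-z)/4) := by
        simp only [GZ]; rw [if_pos h4]
      have e4 : GZ z x = WZ ((x+z)/2) * epsZ ((x-z)/4) := by
        simp only [GZ]; rw [if_pos (by omega : (z - x) % 4 = 0)]
        have h1 : (z + x)/2 = (x+z)/2 := by omega
        have h2 : (z - x)/4 = -((x-z)/4) := by omega
        rw [h1, h2, epsZ_neg]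
      rw [e1, e2, e3, e4]
      set y := (x+z)/2 with hy'
      set b := (x-z)/4 with hb'
      have hx' : x = y + 2*b := by omega
      have hz' : z = y - 2*b := by omega
      have hy : y % 2 = 1 := by omega
      rw [hx', hz', CL b hy]; ring
    · have e1 : GZ x z = 0 := by simp only [GZ]; rw [if_neg (by omega)]
      have e2 : GZ z x = 0 := by simp only [GZ]; rw [if_neg (by omega)]
      have e3 : GZ x (-z) = WZ ((x-z)/2) * epsZ ((x+z)/4) := by
        simp only [GZ]; rw [if_pos (by omega : (x - -z) % 4 = 0)]
        have h1 : (x + -z)/2 = (x-z)/2 := by omega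
        have h2 : (x - -z)/4 = (x+z)/4 := by omega
        rw [h1, h2]
      have e4 : GZ z (-x) = WZ ((x-z)/2) * epsZ ((x+z)/4) := by
        simp only [GZ]; rw [if_pos (by omega : (z - -x) % 4 = 0)]
        have h1 : (z + -x)/2 = -((x-z)/2) := by omega
        have h2 : (z - -x)/4 = (x+z)/4 := by omega
        rw [h1, h2, WZ_neg]
      rw [e1, e2, e3, e4]
      set y := (x-z)/2 with hy'
      set b := (x+z)/4 with hb'
      have hx' : x = y + 2*b := by omega
      have hz' : z = -(y - 2*b) := by omega
      have hy : y % 2 = 1 := by omega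
      rw [hx', hz', WZ_neg, CL b hy]; ring


/-! ### Real-valued weights and series -/

noncomputable section

def Wf (x : ℤ) : ℝ := ((WZ x : ℤ) : ℝ)
def Of (z : ℤ) : ℝ := ((OZ z : ℤ) : ℝ)
def epsf (b : ℤ) : ℝ := ((epsZ b : ℤ) : ℝ)
def Gf (p : ℤ × ℤ) : ℝ := ((GZ p.1 p.2 : ℤ) : ℝ)
def ep (p : ℤ × ℤ) : ℝ := (p.1 : ℝ)^2 + (p.2 : ℝ)^2

def Lf (q : ℝ) : ℝ := 2 * ∑' n : ℕ, (-1 : ℝ)^n * (2*(n:ℝ)+1) * q ^ ((2*(n:ℝ)+1)^2)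
def L1 (q : ℝ) : ℝ := ∑' n : ℕ, (-1 : ℝ)^n * (2*(n:ℝ)+1) * q ^ ((2*(n:ℝ)+1)^2 - 1)
def Pf (q : ℝ) : ℝ := ∑' a : ℕ, q ^ ((2*(a:ℝ)+1)^2 - 1)
def Rf (q : ℝ) : ℝ := theta2 (q^4) * theta3 (q^4) * theta4 (q^4)

variable {q t : ℝ}

lemma Wf_neg (x : ℤ) : Wf (-x) = Wf x := by unfold Wf; rw [WZ_neg]
lemma Wf_abs_le (x : ℤ) : |Wf x| ≤ |(x:ℝ)| := by
  unfold Wf; rw [← Int.cast_abs, ← Int.cast_abs]; exact_mod_cast WZ_abs_le x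
lemma Of_abs_le (z : ℤ) : |Of z| ≤ 1 := by
  unfold Of OZ; split_ifs <;> norm_num
lemma Gf_abs_le (p : ℤ × ℤ) : |Gf p| ≤ (|(p.1:ℝ)|+3) * (|(p.2:ℝ)|+3) := by
  unfold Gf
  have := GZ_abs_le p.1 p.2
  calc |((GZ p.1 p.2 : ℤ) : ℝ)| = ((|GZ p.1 p.2| : ℤ) : ℝ) := by rw [Int.cast_abs]
  _ ≤ (((|p.1| + 3) * (|p.2| + 3) : ℤ) : ℝ) := by exact_mod_cast this
  _ = (|(p.1:ℝ)|+3) * (|(p.2:ℝ)|+3) := by push_cast; ring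

/-! ### Summability -/

lemma base_summable (h0 : 0 < q) (h1 : q < 1) :
    Summable (fun n : ℕ => (2*(n:ℝ)+5) * q ^ ((n:ℝ) - 1)) := by
  have hq : ‖q‖ < 1 := by rwa [Real.norm_of_nonneg h0.le]
  have h1' : Summable (fun n : ℕ => (n:ℝ) * q ^ n) := by
    simpa using summable_pow_mul_geometric_of_norm_lt_one 1 hq
  have h2' : Summable (fun n : ℕ => (q:ℝ) ^ n) := summable_geometric_of_lt_one h0.le h1
  have h3 : Summable (fun n : ℕ => (2*(n:ℝ)+5) * q ^ n) := by
    apply ((h1'.mul_left 2).add (h2'.mul_left 5)).congr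
    intro n; ring
  apply (h3.mul_right q⁻¹).congr
  intro n
  rw [Real.rpow_sub h0, Real.rpow_one, Real.rpow_natCast]
  ring

lemma summable_coef (h0 : 0 < q) (h1 : q < 1) {c : ℕ → ℝ} {E : ℕ → ℝ}
    (hc : ∀ n : ℕ, |c n| ≤ 2*(n:ℝ)+5) (hE : ∀ n : ℕ, (n:ℝ) - 1 ≤ E n) :
    Summable fun n : ℕ => c n * q ^ E n := by
  apply Summable.of_norm_bounded (base_summable h0 h1)
  intro n
  rw [norm_mul, Real.norm_of_nonneg (Real.rpow_nonneg h0.le _)]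
  have h2 : q ^ E n ≤ q ^ ((n:ℝ)-1) := Real.rpow_le_rpow_of_exponent_ge h0 h1.le (hE n)
  have h3 : (0:ℝ) ≤ 2*(n:ℝ)+5 := by positivity
  exact mul_le_mul (hc n) h2 (Real.rpow_nonneg h0.le _) h3

lemma summable_coefZ (h0 : 0 < q) (h1 : q < 1) {c : ℤ → ℝ} {E : ℤ → ℝ}
    (hc : ∀ x : ℤ, |c x| ≤ 2*|(x:ℝ)|+3) (hE : ∀ x : ℤ, |(x:ℝ)| - 1 ≤ E x) :
    Summable fun x : ℤ => c x * q ^ E x := by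
  apply Summable.of_nat_of_neg_add_one
  · apply summable_coef h0 h1
    · intro n
      have := hc n
      simp only [Int.cast_natCast, abs_of_nonneg (Nat.cast_nonneg (α := ℝ) n)] at this
      linarith
    · intro n
      have := hE n
      simp only [Int.cast_natCast, abs_of_nonneg (Nat.cast_nonneg (α := ℝ) n)] at this
      linarith
  · apply summable_coef h0 h1
    · intro n
      have := hc (-(n+1))
      have habs : |((-(n+1) : ℤ) : ℝ)| = (n:ℝ)+1 := by
        push_cast; rw [abs_neg, abs_of_nonneg (by positivity)]
      rw [habs] at this; linarith
    · intro n
      have := hE (-(n+1))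
      have habs : |((-(n+1) : ℤ) : ℝ)| = (n:ℝ)+1 := by
        push_cast; rw [abs_neg, abs_of_nonneg (by positivity)]
      rw [habs] at this; linarith

lemma sq_ge_abs_sub_one (x : ℤ) : |(x:ℝ)| - 1 ≤ (x:ℝ)^2 := by
  nlinarith [abs_nonneg (x:ℝ), sq_abs (x:ℝ), sq_nonneg (|(x:ℝ)| - 1)]

lemma summable_absZ (h0 : 0 < q) (h1 : q < 1) :
    Summable fun x : ℤ => (|(x:ℝ)|+3) * q ^ ((x:ℝ)^2) := by
  apply summable_coefZ h0 h1
  · intro x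
    rw [abs_of_nonneg (by positivity)]
    have := abs_nonneg (x:ℝ); linarith
  · exact sq_ge_abs_sub_one

lemma summable2D (h0 : 0 < q) (h1 : q < 1) :
    Summable fun p : ℤ × ℤ => ((|(p.1:ℝ)|+3) * (|(p.2:ℝ)|+3)) * q ^ ep p := by
  have hA : Summable fun x : ℤ => ‖(|(x:ℝ)|+3) * q ^ ((x:ℝ)^2)‖ :=
    (summable_absZ h0 h1).abs
  have := (Summable.mul_norm hA hA).of_norm
  apply this.congr
  intro p
  rw [ep, Real.rpow_add h0]
  ring

lemma summable2D_of_bound (h0 : 0 < q) (h1 : q < 1) {c : ℤ × ℤ → ℝ}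
    (hc : ∀ p, |c p| ≤ (|(p.1:ℝ)|+3) * (|(p.2:ℝ)|+3)) :
    Summable fun p : ℤ × ℤ => c p * q ^ ep p := by
  apply Summable.of_norm_bounded (summable2D h0 h1)
  intro p
  rw [norm_mul, Real.norm_of_nonneg (Real.rpow_nonneg h0.le _)]
  have h3 : (0:ℝ) ≤ q ^ ep p := Real.rpow_nonneg h0.le _
  have := hc p
  have h4 : (0:ℝ) ≤ (|(p.1:ℝ)|+3) * (|(p.2:ℝ)|+3) := by positivity
  calc ‖c p‖ * q ^ ep p ≤ ((|(p.1:ℝ)|+3) * (|(p.2:ℝ)|+3)) * q ^ ep p := by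
        apply mul_le_mul_of_nonneg_right _ h3
        exact this
  _ = _ := rfl

/-! ### Folding ℤ-sums to ℕ-sums -/

lemma neg_one_zpow_eq (n : ℤ) : (-1 : ℝ) ^ n = epsf n := by
  unfold epsf epsZ
  rcases Int.even_or_odd n with he | ho
  · rw [he.neg_one_zpow, if_pos (Int.even_iff.mp he)]; norm_num
  · have hodd := Int.odd_iff.mp ho
    rw [ho.neg_one_zpow, if_neg (by omega)]; norm_num

lemma theta4_eq (s : ℝ) : theta4 s = ∑' n : ℤ, epsf n * s ^ ((n : ℝ) ^ 2) := by
  unfold theta4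
  exact tsum_congr fun n => by rw [neg_one_zpow_eq]

lemma Wf_odd (k : ℕ) : Wf ((2*(k:ℤ)+1)) = (-1:ℝ)^k * (2*(k:ℝ)+1) := by
  unfold Wf WZ
  rcases Nat.even_or_odd k with ⟨j,hj⟩ | ⟨j,hj⟩
  · have h4 : (2*(k:ℤ)+1) % 4 = 1 := by omega
    rw [if_pos h4, Even.neg_one_pow ⟨j, hj⟩]
    push_cast; ring
  · have h4 : (2*(k:ℤ)+1) % 4 = 3 := by omega
    rw [if_neg (by omega), if_pos h4, Odd.neg_one_pow ⟨j, hj⟩]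
    push_cast; ring

lemma summable_L_nat (h0 : 0 < t) (h1 : t < 1) :
    Summable fun n : ℕ => (-1:ℝ)^n * (2*(n:ℝ)+1) * t ^ ((2*(n:ℝ)+1)^2) := by
  apply summable_coef h0 h1
  · intro n
    rw [abs_mul, abs_pow, abs_neg, abs_one, one_pow, one_mul,
      abs_of_nonneg (by positivity : (0:ℝ) ≤ 2*(n:ℝ)+1)]
    linarith
  · intro n; nlinarith [sq_nonneg (2*(n:ℝ)+1), Nat.cast_nonneg (α := ℝ) n]

lemma summable_L1_nat (h0 : 0 < t) (h1 : t < 1) :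
    Summable fun n : ℕ => (-1:ℝ)^n * (2*(n:ℝ)+1) * t ^ ((2*(n:ℝ)+1)^2 - 1) := by
  apply summable_coef h0 h1
  · intro n
    rw [abs_mul, abs_pow, abs_neg, abs_one, one_pow, one_mul,
      abs_of_nonneg (by positivity : (0:ℝ) ≤ 2*(n:ℝ)+1)]
    linarith
  · intro n; nlinarith [sq_nonneg ((n:ℝ)), Nat.cast_nonneg (α := ℝ) n]

lemma summable_P_nat (h0 : 0 < t) (h1 : t < 1) :
    Summable fun n : ℕ => t ^ ((2*(n:ℝ)+1)^2 - 1) := by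
  have := summable_coef h0 h1 (c := fun _ : ℕ => (1:ℝ)) (E := fun n : ℕ => (2*(n:ℝ)+1)^2 - 1)
    (by intro n; show |(1:ℝ)| ≤ 2*(n:ℝ)+5; rw [abs_one]; linarith [Nat.cast_nonneg (α := ℝ) n])
    (by intro n; show (n:ℝ) - 1 ≤ (2*(n:ℝ)+1)^2 - 1
        nlinarith [sq_nonneg ((n:ℝ)), Nat.cast_nonneg (α := ℝ) n])
  simpa using this

lemma summable_W (h0 : 0 < t) (h1 : t < 1) :
    Summable fun x : ℤ => Wf x * t ^ ((x:ℝ)^2) := by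
  apply summable_coefZ h0 h1
  · intro x; have := Wf_abs_le x; have := abs_nonneg ((x:ℤ):ℝ); linarith
  · exact sq_ge_abs_sub_one

lemma summable_O (h0 : 0 < t) (h1 : t < 1) :
    Summable fun x : ℤ => Of x * t ^ ((x:ℝ)^2) := by
  apply summable_coefZ h0 h1
  · intro x; have := Of_abs_le x; have := abs_nonneg ((x:ℤ):ℝ); linarith
  · exact sq_ge_abs_sub_one

lemma summable_eps (h0 : 0 < t) (h1 : t < 1) :
    Summable fun x : ℤ => epsf x * t ^ ((x:ℝ)^2) := by
  apply summable_coefZ h0 h1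
  · intro x
    have : |epsf x| = 1 := by unfold epsf; rw [← Int.cast_abs, epsZ_abs]; norm_num
    rw [this]; have := abs_nonneg ((x:ℤ):ℝ); linarith
  · exact sq_ge_abs_sub_one

/-- Generic fold: an even ℤ-function supported on odd integers. -/
lemma fold_even_odd (F : ℤ → ℝ) (hFneg : ∀ x, F (-x) = F x)
    (hFeven : ∀ x, x % 2 = 0 → F x = 0) (hsum : Summable F) :
    ∑' x : ℤ, F x = 2 * ∑' k : ℕ, F (2*(k:ℤ)+1) := by
  have hnat : Summable fun n : ℕ => F n := hsum.comp_injective Nat.cast_injective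
  have hinjneg : Function.Injective (fun n : ℕ => -((n:ℤ)+1)) := by
    intro a b h
    simp only [neg_inj, add_left_inj, Nat.cast_inj] at h
    exact h
  have hneg : Summable fun n : ℕ => F (-((n:ℤ)+1)) := hsum.comp_injective hinjneg
  rw [tsum_of_nat_of_neg_add_one hnat hneg]
  have h1 : (∑' n : ℕ, F (n:ℤ)) = ∑' k : ℕ, F (2*(k:ℤ)+1) := by
    have hinj : Function.Injective (fun k : ℕ => 2*k+1) := by
      intro a b h
      simp only [] at h
      omega
    have hsupp : Function.support (fun n : ℕ => F (n:ℤ)) ⊆ Set.range (fun k : ℕ => 2*k+1) := by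
      intro n hn
      rcases Nat.even_or_odd n with ⟨j,hj⟩ | ⟨j,hj⟩
      · exact absurd (hFeven (n:ℤ) (by omega)) hn
      · refine ⟨j, ?_⟩
        show 2*j+1 = n
        omega
    rw [← hinj.tsum_eq hsupp]
    exact tsum_congr fun k => congrArg F (by push_cast; ring)
  have h2 : (∑' n : ℕ, F (-((n:ℤ)+1))) = ∑' k : ℕ, F (2*(k:ℤ)+1) := by
    have hinj : Function.Injective (fun k : ℕ => 2*k) := by
      intro a b h
      simp only [] at h
      omega
    have hsupp : Function.support (fun n : ℕ => F (-((n:ℤ)+1)))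
        ⊆ Set.range (fun k : ℕ => 2*k) := by
      intro n hn
      rcases Nat.even_or_odd n with ⟨j,hj⟩ | ⟨j,hj⟩
      · refine ⟨j, ?_⟩
        show 2*j = n
        omega
      · exact absurd (hFeven (-((n:ℤ)+1)) (by omega)) hn
    rw [← hinj.tsum_eq hsupp]
    refine tsum_congr fun k => ?_
    calc (fun n : ℕ => F (-((n:ℤ)+1))) (2*k) = F (-((2*(k:ℤ)+1))) := by
          exact congrArg F (by push_cast; ring)
    _ = F (2*(k:ℤ)+1) := hFneg _
  rw [h1, h2]
  ring

lemma cast_neg_sq (x : ℤ) : (((-x : ℤ)):ℝ)^2 = ((x:ℤ):ℝ)^2 := by push_cast; ring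

lemma Of_neg (x : ℤ) : Of (-x) = Of x := by
  unfold Of OZ
  split_ifs with h1 h2 h2 <;> first | rfl | omega

/-- Folding the W-weighted sum over ℤ. -/
lemma Wfold (h0 : 0 < t) (h1 : t < 1) :
    ∑' x : ℤ, Wf x * t ^ ((x:ℝ)^2) = Lf t := by
  rw [fold_even_odd (fun x : ℤ => Wf x * t ^ ((x:ℝ)^2))
    (fun x => by
      show Wf (-x) * t ^ (((-x : ℤ)):ℝ)^2 = Wf x * t ^ ((x:ℝ)^2)
      rw [Wf_neg, cast_neg_sq])
    (fun x hx => by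
      show Wf x * t ^ ((x:ℝ)^2) = 0
      rw [show Wf x = 0 from by unfold Wf; rw [WZ_even hx]; norm_num, zero_mul])
    (summable_W h0 h1)]
  unfold Lf
  congr 1
  refine tsum_congr fun k => ?_
  rw [Wf_odd]
  congr 2
  push_cast
  ring

/-- Folding the O-weighted sum over ℤ. -/
lemma Ofold (h0 : 0 < t) (h1 : t < 1) :
    ∑' x : ℤ, Of x * t ^ ((x:ℝ)^2) = 2 * t * Pf t := by
  rw [fold_even_odd (fun x : ℤ => Of x * t ^ ((x:ℝ)^2))
    (fun x => by
      show Of (-x) * t ^ (((-x : ℤ)):ℝ)^2 = Of x * t ^ ((x:ℝ)^2)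
      rw [Of_neg, cast_neg_sq])
    (fun x hx => by
      show Of x * t ^ ((x:ℝ)^2) = 0
      rw [show Of x = 0 from by unfold Of OZ; rw [if_pos hx]; norm_num, zero_mul])
    (summable_O h0 h1)]
  have hterm : ∀ k : ℕ, Of (2*(k:ℤ)+1) * t ^ (((2*(k:ℤ)+1 : ℤ)):ℝ)^2
      = t * t ^ ((2*(k:ℝ)+1)^2 - 1) := by
    intro k
    have hOone : Of (2*(k:ℤ)+1) = 1 := by
      unfold Of OZ; rw [if_neg (by omega)]; norm_num
    rw [hOone, one_mul,
      show (((2*(k:ℤ)+1 : ℤ)):ℝ)^2 = 1 + ((2*(k:ℝ)+1)^2 - 1) from by push_cast; ring,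
      Real.rpow_add h0, Real.rpow_one]
  calc 2 * ∑' k : ℕ, Of (2*(k:ℤ)+1) * t ^ (((2*(k:ℤ)+1 : ℤ)):ℝ)^2
      = 2 * ∑' k : ℕ, t * t ^ ((2*(k:ℝ)+1)^2 - 1) := by
        congr 1; exact tsum_congr hterm
    _ = 2 * (t * ∑' k : ℕ, t ^ ((2*(k:ℝ)+1)^2 - 1)) := by rw [tsum_mul_left]
    _ = 2 * t * Pf t := by unfold Pf; ring

/-! ### Products of sums -/

lemma pow_rpow (hq : 0 ≤ q) (k : ℕ) (r : ℝ) : (q^k) ^ r = q ^ ((k:ℝ)*r) := by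
  rw [← Real.rpow_natCast q k, ← Real.rpow_mul hq]

lemma summable_abs_of (f : ℤ → ℝ) (hf : Summable f) : Summable fun x => ‖f x‖ := by
  have := hf.abs
  exact this.congr fun x => (Real.norm_eq_abs _).symm

lemma SF_eq (h0 : 0 < q) (h1 : q < 1) :
    Lf q * (2*q*Pf q) = ∑' p : ℤ × ℤ, (Wf p.1 * Of p.2) * q ^ ep p := by
  rw [← Wfold h0 h1, ← Ofold h0 h1,
    tsum_mul_tsum_of_summable_norm (summable_abs_of _ (summable_W h0 h1))
      (summable_abs_of _ (summable_O h0 h1))]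
  refine tsum_congr fun p => ?_
  rw [ep, Real.rpow_add h0]
  ring

lemma SG_eq (h0 : 0 < q) (h1 : q < 1) :
    Lf (q^2) * theta4 (q^8) = ∑' p : ℤ × ℤ, Gf p * q ^ ep p := by
  have h20 : 0 < q^2 := by positivity
  have h21 : q^2 < 1 := pow_lt_one₀ h0.le h1 (by norm_num)
  have h80 : 0 < q^8 := by positivity
  have h81 : q^8 < 1 := pow_lt_one₀ h0.le h1 (by norm_num)
  have hinj : Function.Injective (fun p : ℤ × ℤ => (p.1+2*p.2, p.1-2*p.2)) := by
    intro a b h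
    simp only [Prod.mk.injEq] at h
    exact Prod.ext (by omega) (by omega)
  have hsupp : Function.support (fun p : ℤ × ℤ => Gf p * q ^ ep p)
      ⊆ Set.range (fun p : ℤ × ℤ => (p.1+2*p.2, p.1-2*p.2)) := by
    intro p hp
    have h4 : (p.1 - p.2) % 4 = 0 := by
      by_contra hc
      apply hp
      show Gf p * q ^ ep p = 0
      have : Gf p = 0 := by unfold Gf GZ; rw [if_neg hc]; norm_num
      rw [this, zero_mul]
    refine ⟨((p.1+p.2)/2, (p.1-p.2)/4), ?_⟩
    show ((p.1+p.2)/2 + 2*((p.1-p.2)/4), (p.1+p.2)/2 - 2*((p.1-p.2)/4)) = p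
    exact Prod.ext (by omega) (by omega)
  rw [← hinj.tsum_eq hsupp]
  have hterm : ∀ p : ℤ × ℤ,
      (fun p : ℤ × ℤ => Gf p * q ^ ep p) ((p.1+2*p.2, p.1-2*p.2))
        = (Wf p.1 * (q^2) ^ ((p.1:ℝ)^2)) * (epsf p.2 * (q^8) ^ ((p.2:ℝ)^2)) := by
    intro ⟨y,b⟩
    show Gf (y+2*b, y-2*b) * q ^ ep (y+2*b, y-2*b) = _
    have hGf : Gf (y+2*b, y-2*b) = Wf y * epsf b := by
      unfold Gf GZ Wf epsf
      rw [if_pos (by omega : ((y+2*b) - (y-2*b)) % 4 = 0),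
        (by omega : ((y+2*b) + (y-2*b))/2 = y), (by omega : ((y+2*b) - (y-2*b))/4 = b)]
      push_cast
      ring
    have hep : ep (y+2*b, y-2*b) = (2:ℝ)*(y:ℝ)^2 + 8*(b:ℝ)^2 := by
      unfold ep
      push_cast
      ring
    rw [hGf, hep, pow_rpow h0.le, pow_rpow h0.le, Real.rpow_add h0]
    push_cast
    ring
  rw [tsum_congr hterm,
    ← tsum_mul_tsum_of_summable_norm (summable_abs_of _ (summable_W h20 h21))
      (summable_abs_of _ (summable_eps h80 h81)),
    Wfold h20 h21, theta4_eq]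

lemma tsum_reindex (h0 : 0 < q) (c : ℤ × ℤ → ℝ) (e : ℤ × ℤ ≃ ℤ × ℤ)
    (he : ∀ p, ep (e p) = ep p) :
    ∑' p : ℤ × ℤ, c (e p) * q ^ ep p = ∑' p : ℤ × ℤ, c p * q ^ ep p := by
  rw [← e.tsum_eq (fun p => c p * q ^ ep p)]
  exact tsum_congr fun p => by rw [he]

/-- Key identity 1: `q·L(q)·ψ(q⁸) = L(q²)·θ₄(q⁸)`. -/
lemma key1 (h0 : 0 < q) (h1 : q < 1) :
    q * Lf q * Pf q = Lf (q^2) * theta4 (q^8) := by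
  have sWO : Summable fun p : ℤ × ℤ => (Wf p.1 * Of p.2) * q ^ ep p := by
    apply summable2D_of_bound h0 h1
    intro p
    rw [abs_mul]
    have h1' := Wf_abs_le p.1
    have h2' := Of_abs_le p.2
    have h3' := abs_nonneg (Wf p.1)
    have h4' := abs_nonneg ((p.1:ℝ))
    have h5' := abs_nonneg ((p.2:ℝ))
    nlinarith [abs_nonneg (Of p.2)]
  have sWO2 : Summable fun p : ℤ × ℤ => (Wf p.2 * Of p.1) * q ^ ep p := by
    apply summable2D_of_bound h0 h1
    intro p
    rw [abs_mul]
    have h1' := Wf_abs_le p.2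
    have h2' := Of_abs_le p.1
    have h3' := abs_nonneg (Wf p.2)
    have h4' := abs_nonneg ((p.1:ℝ))
    have h5' := abs_nonneg ((p.2:ℝ))
    nlinarith [abs_nonneg (Of p.1)]
  have habs_neg : ∀ z : ℤ, |((-z : ℤ):ℝ)| = |(z:ℝ)| := by
    intro z; push_cast; rw [abs_neg]
  have sG1 : Summable fun p : ℤ × ℤ => Gf p * q ^ ep p :=
    summable2D_of_bound h0 h1 fun p => Gf_abs_le p
  have sG2 : Summable fun p : ℤ × ℤ => Gf (p.1, -p.2) * q ^ ep p := by
    apply summable2D_of_bound h0 h1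
    intro p
    have := Gf_abs_le (p.1, -p.2)
    rwa [habs_neg p.2] at this
  have sG3 : Summable fun p : ℤ × ℤ => Gf (p.2, p.1) * q ^ ep p := by
    apply summable2D_of_bound h0 h1
    intro p
    have := Gf_abs_le (p.2, p.1)
    rw [show (|(p.1:ℝ)|+3) * (|(p.2:ℝ)|+3) = (|(p.2:ℝ)|+3) * (|(p.1:ℝ)|+3) from by ring]
    exact this
  have sG4 : Summable fun p : ℤ × ℤ => Gf (p.2, -p.1) * q ^ ep p := by
    apply summable2D_of_bound h0 h1
    intro p
    have := Gf_abs_le (p.2, -p.1)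
    rw [habs_neg p.1] at this
    rw [show (|(p.1:ℝ)|+3) * (|(p.2:ℝ)|+3) = (|(p.2:ℝ)|+3) * (|(p.1:ℝ)|+3) from by ring]
    exact this
  have hepswap : ∀ p : ℤ × ℤ, ep ((Equiv.prodComm ℤ ℤ) p) = ep p := by
    intro p; unfold ep; simp [Equiv.prodComm]; ring
  have e1 : (∑' p : ℤ × ℤ, (Wf p.1 * Of p.2) * q ^ ep p)
      = ∑' p : ℤ × ℤ, (Wf p.2 * Of p.1) * q ^ ep p := by
    rw [← tsum_reindex h0 (fun p => Wf p.1 * Of p.2) (Equiv.prodComm ℤ ℤ) hepswap]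
    exact tsum_congr fun p => rfl
  have hepflip : ∀ p : ℤ × ℤ, ep ((Equiv.refl ℤ).prodCongr (Equiv.neg ℤ) p) = ep p := by
    intro p; unfold ep
    show ((p.1:ℤ):ℝ)^2 + (((-p.2 : ℤ)):ℝ)^2 = _
    rw [cast_neg_sq]
  have e2 : (∑' p : ℤ × ℤ, Gf p * q ^ ep p)
      = ∑' p : ℤ × ℤ, Gf (p.1, -p.2) * q ^ ep p := by
    rw [← tsum_reindex h0 (fun p => Gf p) ((Equiv.refl ℤ).prodCongr (Equiv.neg ℤ)) hepflip]
    exact tsum_congr fun p => rfl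
  have hepsf : ∀ p : ℤ × ℤ, ep ((Equiv.prodComm ℤ ℤ).trans
      ((Equiv.refl ℤ).prodCongr (Equiv.neg ℤ)) p) = ep p := by
    intro p; unfold ep
    show ((p.2:ℤ):ℝ)^2 + (((-p.1 : ℤ)):ℝ)^2 = _
    rw [cast_neg_sq]; ring
  have e3 : (∑' p : ℤ × ℤ, Gf p * q ^ ep p)
      = ∑' p : ℤ × ℤ, Gf (p.2, p.1) * q ^ ep p := by
    rw [← tsum_reindex h0 (fun p => Gf p) (Equiv.prodComm ℤ ℤ) hepswap]
    exact tsum_congr fun p => rfl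
  have e4 : (∑' p : ℤ × ℤ, Gf p * q ^ ep p)
      = ∑' p : ℤ × ℤ, Gf (p.2, -p.1) * q ^ ep p := by
    rw [← tsum_reindex h0 (fun p => Gf p) ((Equiv.prodComm ℤ ℤ).trans
      ((Equiv.refl ℤ).prodCongr (Equiv.neg ℤ))) hepsf]
    exact tsum_congr fun p => rfl
  have hAB : (∑' p : ℤ × ℤ, (Wf p.1 * Of p.2) * q ^ ep p)
      = 2 * ∑' p : ℤ × ℤ, Gf p * q ^ ep p := by
    have step : (∑' p : ℤ × ℤ, (Wf p.1 * Of p.2) * q ^ ep p)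
        + (∑' p : ℤ × ℤ, (Wf p.2 * Of p.1) * q ^ ep p)
        = (∑' p : ℤ × ℤ, Gf p * q ^ ep p) + (∑' p : ℤ × ℤ, Gf (p.1, -p.2) * q ^ ep p)
          + (∑' p : ℤ × ℤ, Gf (p.2, p.1) * q ^ ep p)
          + (∑' p : ℤ × ℤ, Gf (p.2, -p.1) * q ^ ep p) := by
      rw [← Summable.tsum_add sWO sWO2, ← Summable.tsum_add sG1 sG2, ← Summable.tsum_add (sG1.add sG2) sG3,
        ← Summable.tsum_add ((sG1.add sG2).add sG3) sG4]
      refine tsum_congr fun p => ?_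
      have hcast : Wf p.1 * Of p.2 + Wf p.2 * Of p.1
          = Gf (p.1, p.2) + Gf (p.1, -p.2) + Gf (p.2, p.1) + Gf (p.2, -p.1) := by
        unfold Wf Of Gf
        exact_mod_cast PWZ p.1 p.2
      have hGfp : Gf (p.1, p.2) = Gf p := rfl
      calc (Wf p.1 * Of p.2) * q ^ ep p + (Wf p.2 * Of p.1) * q ^ ep p
          = (Wf p.1 * Of p.2 + Wf p.2 * Of p.1) * q ^ ep p := by ring
        _ = (Gf p + Gf (p.1, -p.2) + Gf (p.2, p.1) + Gf (p.2, -p.1)) * q ^ ep p := by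
            rw [hcast, hGfp]
        _ = _ := by ring
    rw [← e1] at step
    rw [← e2, ← e3, ← e4] at step
    linarith
  have hfin : Lf q * (2*q*Pf q) = 2 * (Lf (q^2) * theta4 (q^8)) := by
    rw [SF_eq h0 h1, hAB, SG_eq h0 h1]
  linear_combination hfin / 2

/-! ### Landen-type theta identities -/

lemma summable_pure (h0 : 0 < t) (h1 : t < 1) :
    Summable fun x : ℤ => t ^ ((x:ℝ)^2) := by
  have := summable_coefZ h0 h1 (c := fun _ : ℤ => (1:ℝ)) (E := fun x : ℤ => (x:ℝ)^2)
    (by intro x; show |(1:ℝ)| ≤ _; rw [abs_one]; have := abs_nonneg ((x:ℤ):ℝ); linarith)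
    (by intro x; exact sq_ge_abs_sub_one x)
  exact this.congr fun x => by rw [one_mul]

lemma summable_th2 (h0 : 0 < t) (h1 : t < 1) :
    Summable fun x : ℤ => t ^ (((x:ℝ)+1/2)^2) := by
  have := summable_coefZ h0 h1 (c := fun _ : ℤ => (1:ℝ)) (E := fun x : ℤ => ((x:ℝ)+1/2)^2)
    (by intro x; show |(1:ℝ)| ≤ _; rw [abs_one]; have := abs_nonneg ((x:ℤ):ℝ); linarith)
    (by intro x
        show |(x:ℝ)| - 1 ≤ ((x:ℝ)+1/2)^2
        nlinarith [sq_nonneg (|(x:ℝ)| - 1/2), sq_abs ((x:ℝ)), abs_nonneg ((x:ℝ)),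
          neg_abs_le ((x:ℝ)), le_abs_self ((x:ℝ))])
  exact this.congr fun x => by rw [one_mul]

lemma epsf_add (u v : ℤ) : epsf (u+v) = epsf u * epsf v := by
  unfold epsf epsZ
  split_ifs <;> first | omega | norm_num

lemma theta4_sum_eq (h0 : 0 < t) (h1 : t < 1) :
    theta3 t * theta4 t = ∑' p : ℤ × ℤ, epsf p.2 * t ^ ep p := by
  rw [theta4_eq]
  unfold theta3
  rw [tsum_mul_tsum_of_summable_norm (summable_abs_of _ (summable_pure h0 h1))
    (summable_abs_of _ (summable_eps h0 h1))]
  refine tsum_congr fun p => ?_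
  rw [ep, Real.rpow_add h0]
  ring

/-- Landen identity (I): θ₃(t)θ₄(t) = θ₄(t²)². -/
lemma landenI (h0 : 0 < t) (h1 : t < 1) : theta3 t * theta4 t = theta4 (t^2)^2 := by
  have sA : Summable fun p : ℤ × ℤ => epsf p.2 * t ^ ep p := by
    apply summable2D_of_bound h0 h1
    intro p
    have : |epsf p.2| = 1 := by unfold epsf; rw [← Int.cast_abs, epsZ_abs]; norm_num
    rw [this]
    nlinarith [abs_nonneg ((p.1:ℝ)), abs_nonneg ((p.2:ℝ))]
  have sA2 : Summable fun p : ℤ × ℤ => epsf p.1 * t ^ ep p := by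
    apply summable2D_of_bound h0 h1
    intro p
    have : |epsf p.1| = 1 := by unfold epsf; rw [← Int.cast_abs, epsZ_abs]; norm_num
    rw [this]
    nlinarith [abs_nonneg ((p.1:ℝ)), abs_nonneg ((p.2:ℝ))]
  set Cf : ℤ × ℤ → ℝ := fun p => if (p.1 - p.2) % 2 = 0 then epsf p.1 else 0 with hCf
  have hCbound : ∀ p : ℤ × ℤ, |Cf p| ≤ (|(p.1:ℝ)|+3) * (|(p.2:ℝ)|+3) := by
    intro p
    rw [hCf]
    have h4 := abs_nonneg ((p.1:ℝ)); have h5 := abs_nonneg ((p.2:ℝ))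
    show |(if (p.1 - p.2) % 2 = 0 then epsf p.1 else 0)| ≤ (|(p.1:ℝ)|+3) * (|(p.2:ℝ)|+3)
    split_ifs
    · have : |epsf p.1| = 1 := by unfold epsf; rw [← Int.cast_abs, epsZ_abs]; norm_num
      rw [this]; nlinarith
    · rw [abs_zero]; nlinarith
  have sC : Summable fun p : ℤ × ℤ => Cf p * t ^ ep p :=
    summable2D_of_bound h0 h1 hCbound
  have sC2 : Summable fun p : ℤ × ℤ => Cf (p.2, p.1) * t ^ ep p := by
    apply summable2D_of_bound h0 h1
    intro p
    have := hCbound (p.2, p.1)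
    rw [show (|(p.1:ℝ)|+3) * (|(p.2:ℝ)|+3) = (|(p.2:ℝ)|+3) * (|(p.1:ℝ)|+3) from by ring]
    exact this
  have hepswap : ∀ p : ℤ × ℤ, ep ((Equiv.prodComm ℤ ℤ) p) = ep p := by
    intro p; unfold ep; simp [Equiv.prodComm]; ring
  -- A = C
  have hAC : (∑' p : ℤ × ℤ, epsf p.2 * t ^ ep p) = ∑' p : ℤ × ℤ, Cf p * t ^ ep p := by
    have eA : (∑' p : ℤ × ℤ, epsf p.2 * t ^ ep p)
        = ∑' p : ℤ × ℤ, epsf p.1 * t ^ ep p := by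
      rw [← tsum_reindex h0 (fun p => epsf p.2) (Equiv.prodComm ℤ ℤ) hepswap]
      exact tsum_congr fun p => rfl
    have eC : (∑' p : ℤ × ℤ, Cf p * t ^ ep p)
        = ∑' p : ℤ × ℤ, Cf (p.2, p.1) * t ^ ep p := by
      rw [← tsum_reindex h0 (fun p => Cf p) (Equiv.prodComm ℤ ℤ) hepswap]
      exact tsum_congr fun p => rfl
    have hpw : ∀ p : ℤ × ℤ, epsf p.2 * t ^ ep p + epsf p.1 * t ^ ep p
        = Cf p * t ^ ep p + Cf (p.2, p.1) * t ^ ep p := by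
      intro p
      have : epsf p.2 + epsf p.1 = Cf p + Cf (p.2, p.1) := by
        rw [hCf]
        show epsf p.2 + epsf p.1
          = (if (p.1 - p.2) % 2 = 0 then epsf p.1 else 0)
            + (if (p.2 - p.1) % 2 = 0 then epsf p.2 else 0)
        unfold epsf epsZ
        split_ifs <;> first | omega | norm_num
      linear_combination (t ^ ep p) * this
    have step : (∑' p : ℤ × ℤ, epsf p.2 * t ^ ep p) + (∑' p : ℤ × ℤ, epsf p.1 * t ^ ep p)
        = (∑' p : ℤ × ℤ, Cf p * t ^ ep p) + ∑' p : ℤ × ℤ, Cf (p.2, p.1) * t ^ ep p := by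
      rw [← Summable.tsum_add sA sA2, ← Summable.tsum_add sC sC2]
      exact tsum_congr hpw
    rw [← eA, ← eC] at step
    linarith
  -- C = θ₄(t²)²
  have h20 : 0 < t^2 := by positivity
  have h21 : t^2 < 1 := pow_lt_one₀ h0.le h1 (by norm_num)
  have hinj : Function.Injective (fun p : ℤ × ℤ => (p.1+p.2, p.1-p.2)) := by
    intro a b h
    simp only [Prod.mk.injEq] at h
    exact Prod.ext (by omega) (by omega)
  have hsupp : Function.support (fun p : ℤ × ℤ => Cf p * t ^ ep p)
      ⊆ Set.range (fun p : ℤ × ℤ => (p.1+p.2, p.1-p.2)) := by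
    intro p hp
    have h2 : (p.1 - p.2) % 2 = 0 := by
      by_contra hc
      apply hp
      show Cf p * t ^ ep p = 0
      rw [hCf]
      show (if (p.1 - p.2) % 2 = 0 then epsf p.1 else 0) * t ^ ep p = 0
      rw [if_neg hc, zero_mul]
    refine ⟨((p.1+p.2)/2, (p.1-p.2)/2), ?_⟩
    show ((p.1+p.2)/2 + (p.1-p.2)/2, (p.1+p.2)/2 - (p.1-p.2)/2) = p
    exact Prod.ext (by omega) (by omega)
  have hCval : (∑' p : ℤ × ℤ, Cf p * t ^ ep p) = theta4 (t^2) * theta4 (t^2) := by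
    rw [← hinj.tsum_eq hsupp]
    have hterm : ∀ p : ℤ × ℤ,
        (fun p : ℤ × ℤ => Cf p * t ^ ep p) ((p.1+p.2, p.1-p.2))
        = (epsf p.1 * (t^2) ^ ((p.1:ℝ)^2)) * (epsf p.2 * (t^2) ^ ((p.2:ℝ)^2)) := by
      intro ⟨u,v⟩
      show Cf (u+v, u-v) * t ^ ep (u+v, u-v) = _
      have hc : Cf (u+v, u-v) = epsf u * epsf v := by
        rw [hCf]
        show (if ((u+v) - (u-v)) % 2 = 0 then epsf (u+v) else 0) = _
        rw [if_pos (by omega), epsf_add]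
      have hep : ep (u+v, u-v) = (2:ℝ)*(u:ℝ)^2 + 2*(v:ℝ)^2 := by
        unfold ep; push_cast; ring
      rw [hc, hep, pow_rpow h0.le, pow_rpow h0.le, Real.rpow_add h0]
      push_cast
      ring
    rw [tsum_congr hterm,
      ← tsum_mul_tsum_of_summable_norm (summable_abs_of _ (summable_eps h20 h21))
        (summable_abs_of _ (summable_eps h20 h21))]
    congr 1 <;> exact (theta4_eq _).symm
  rw [theta4_sum_eq h0 h1, hAC, hCval]; ring

/-- Landen identity (II): θ₂(t)² = 2θ₂(t²)θ₃(t²). -/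
lemma landenII (h0 : 0 < t) (h1 : t < 1) : theta2 t^2 = 2 * theta2 (t^2) * theta3 (t^2) := by
  have h20 : 0 < t^2 := by positivity
  have h21 : t^2 < 1 := pow_lt_one₀ h0.le h1 (by norm_num)
  set dp : ℤ × ℤ → ℝ := fun p => ((p.1:ℝ)+1/2)^2 + ((p.2:ℝ)+1/2)^2 with hdp
  have sD : Summable fun p : ℤ × ℤ => t ^ dp p := by
    have := (Summable.mul_norm (summable_abs_of _ (summable_th2 h0 h1))
      (summable_abs_of _ (summable_th2 h0 h1))).of_norm
    apply this.congr
    intro p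
    rw [hdp]
    show t ^ (((p.1:ℝ)+1/2)^2) * t ^ (((p.2:ℝ)+1/2)^2) = _
    rw [← Real.rpow_add h0]
  have sD1 : Summable fun p : ℤ × ℤ =>
      (if (p.1 - p.2) % 2 = 0 then t ^ dp p else 0) := by
    apply sD.of_norm_bounded
    intro p
    split_ifs
    · rw [Real.norm_of_nonneg (Real.rpow_nonneg h0.le _)]
    · rw [norm_zero]; exact Real.rpow_nonneg h0.le _
  have sD2 : Summable fun p : ℤ × ℤ =>
      (if (p.1 - p.2) % 2 = 0 then 0 else t ^ dp p) := by
    apply sD.of_norm_bounded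
    intro p
    split_ifs
    · rw [norm_zero]; exact Real.rpow_nonneg h0.le _
    · rw [Real.norm_of_nonneg (Real.rpow_nonneg h0.le _)]
  have hprod : theta2 t^2 = ∑' p : ℤ × ℤ, t ^ dp p := by
    rw [sq]
    unfold theta2
    rw [tsum_mul_tsum_of_summable_norm (summable_abs_of _ (summable_th2 h0 h1))
      (summable_abs_of _ (summable_th2 h0 h1))]
    refine tsum_congr fun p => ?_
    rw [hdp]
    show t ^ (((p.1:ℝ)+1/2)^2) * t ^ (((p.2:ℝ)+1/2)^2) = _
    rw [← Real.rpow_add h0]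
  have hsplit : (∑' p : ℤ × ℤ, t ^ dp p)
      = (∑' p : ℤ × ℤ, if (p.1 - p.2) % 2 = 0 then t ^ dp p else 0)
        + ∑' p : ℤ × ℤ, if (p.1 - p.2) % 2 = 0 then 0 else t ^ dp p := by
    rw [← Summable.tsum_add sD1 sD2]
    refine tsum_congr fun p => ?_
    split_ifs <;> ring
  -- even part
  have hinj1 : Function.Injective (fun p : ℤ × ℤ => (p.1+p.2, p.1-p.2)) := by
    intro a b h
    simp only [Prod.mk.injEq] at h
    exact Prod.ext (by omega) (by omega)
  have hsupp1 : Function.support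
      (fun p : ℤ × ℤ => if (p.1 - p.2) % 2 = 0 then t ^ dp p else 0)
      ⊆ Set.range (fun p : ℤ × ℤ => (p.1+p.2, p.1-p.2)) := by
    intro p hp
    have h2 : (p.1 - p.2) % 2 = 0 := by
      by_contra hc
      exact hp (by show (if (p.1 - p.2) % 2 = 0 then t ^ dp p else 0) = 0; rw [if_neg hc])
    refine ⟨((p.1+p.2)/2, (p.1-p.2)/2), ?_⟩
    show ((p.1+p.2)/2 + (p.1-p.2)/2, (p.1+p.2)/2 - (p.1-p.2)/2) = p
    exact Prod.ext (by omega) (by omega)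
  have hD1 : (∑' p : ℤ × ℤ, if (p.1 - p.2) % 2 = 0 then t ^ dp p else 0)
      = theta2 (t^2) * theta3 (t^2) := by
    rw [← hinj1.tsum_eq hsupp1]
    have hterm : ∀ p : ℤ × ℤ,
        (fun p : ℤ × ℤ => if (p.1 - p.2) % 2 = 0 then t ^ dp p else 0) ((p.1+p.2, p.1-p.2))
        = ((t^2) ^ (((p.1:ℝ)+1/2)^2)) * ((t^2) ^ ((p.2:ℝ)^2)) := by
      intro ⟨u,v⟩
      show (if ((u+v) - (u-v)) % 2 = 0 then t ^ dp (u+v, u-v) else 0) = _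
      rw [if_pos (by omega)]
      have hd : dp (u+v, u-v) = 2*((u:ℝ)+1/2)^2 + 2*(v:ℝ)^2 := by
        rw [hdp]; push_cast; ring
      rw [hd, pow_rpow h0.le, pow_rpow h0.le, Real.rpow_add h0]
      ring
    rw [tsum_congr hterm,
      ← tsum_mul_tsum_of_summable_norm (summable_abs_of _ (summable_th2 h20 h21))
        (summable_abs_of _ (summable_pure h20 h21))]
    rfl
  -- odd part
  have hinj2 : Function.Injective (fun p : ℤ × ℤ => (p.1+p.2, p.1-p.2-1)) := by
    intro a b h
    simp only [Prod.mk.injEq] at h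
    exact Prod.ext (by omega) (by omega)
  have hsupp2 : Function.support
      (fun p : ℤ × ℤ => if (p.1 - p.2) % 2 = 0 then 0 else t ^ dp p)
      ⊆ Set.range (fun p : ℤ × ℤ => (p.1+p.2, p.1-p.2-1)) := by
    intro p hp
    have h2 : (p.1 - p.2) % 2 ≠ 0 := by
      by_contra hc
      exact hp (by show (if (p.1 - p.2) % 2 = 0 then 0 else t ^ dp p) = 0; rw [if_pos hc])
    refine ⟨((p.1+p.2+1)/2, (p.1-p.2-1)/2), ?_⟩
    show ((p.1+p.2+1)/2 + (p.1-p.2-1)/2, (p.1+p.2+1)/2 - (p.1-p.2-1)/2 - 1) = p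
    exact Prod.ext (by omega) (by omega)
  have hD2 : (∑' p : ℤ × ℤ, if (p.1 - p.2) % 2 = 0 then 0 else t ^ dp p)
      = theta3 (t^2) * theta2 (t^2) := by
    rw [← hinj2.tsum_eq hsupp2]
    have hterm : ∀ p : ℤ × ℤ,
        (fun p : ℤ × ℤ => if (p.1 - p.2) % 2 = 0 then 0 else t ^ dp p) ((p.1+p.2, p.1-p.2-1))
        = ((t^2) ^ ((p.1:ℝ)^2)) * ((t^2) ^ (((p.2:ℝ)+1/2)^2)) := by
      intro ⟨a,b⟩
      show (if ((a+b) - (a-b-1)) % 2 = 0 then 0 else t ^ dp (a+b, a-b-1)) = _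
      rw [if_neg (by omega)]
      have hd : dp (a+b, a-b-1) = 2*(a:ℝ)^2 + 2*((b:ℝ)+1/2)^2 := by
        rw [hdp]; push_cast; ring
      rw [hd, pow_rpow h0.le, pow_rpow h0.le, Real.rpow_add h0]
      ring
    rw [tsum_congr hterm,
      ← tsum_mul_tsum_of_summable_norm (summable_abs_of _ (summable_pure h20 h21))
        (summable_abs_of _ (summable_th2 h20 h21))]
    rfl
  rw [hprod, hsplit, hD1, hD2]
  ring

/-- θ₂(q⁴) = 2q·ψ(q⁸). -/
lemma trivT2 (h0 : 0 < q) (h1 : q < 1) : theta2 (q^4) = 2*q*Pf q := by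
  unfold theta2
  have hterm : ∀ n : ℤ, (q^4 : ℝ) ^ (((n:ℝ)+1/2)^2) = q ^ ((2*(n:ℝ)+1)^2) := by
    intro n
    rw [pow_rpow h0.le]
    congr 1
    push_cast
    ring
  rw [tsum_congr hterm]
  have hinj : Function.Injective (fun n : ℤ => 2*n+1) := by
    intro a b h
    simp only [] at h
    omega
  have hsupp : Function.support (fun x : ℤ => Of x * q ^ ((x:ℝ)^2))
      ⊆ Set.range (fun n : ℤ => 2*n+1) := by
    intro x hx
    have hodd : x % 2 ≠ 0 := by
      by_contra hc
      apply hx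
      show Of x * q ^ ((x:ℝ)^2) = 0
      rw [show Of x = 0 from by unfold Of OZ; rw [if_pos hc]; norm_num, zero_mul]
    exact ⟨(x-1)/2, by show 2*((x-1)/2)+1 = x; omega⟩
  calc (∑' n : ℤ, q ^ ((2*(n:ℝ)+1)^2))
      = ∑' n : ℤ, Of (2*n+1) * q ^ (((2*n+1 : ℤ):ℝ)^2) := by
        refine tsum_congr fun n => ?_
        rw [show Of (2*n+1) = 1 from by unfold Of OZ; rw [if_neg (by omega)]; norm_num, one_mul]
        congr 1
        push_cast
        ring
    _ = ∑' x : ℤ, Of x * q ^ ((x:ℝ)^2) := hinj.tsum_eq hsupp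
    _ = 2*q*Pf q := Ofold h0 h1

/-- Key identity 2: `q·R(q)·ψ(q⁸) = R(q²)·θ₄(q⁸)`. -/
lemma key2 (h0 : 0 < q) (h1 : q < 1) :
    q * Rf q * Pf q = Rf (q^2) * theta4 (q^8) := by
  have h20 : 0 < q^2 := by positivity
  have h21 : q^2 < 1 := pow_lt_one₀ h0.le h1 (by norm_num)
  have h40 : 0 < q^4 := by positivity
  have h41 : q^4 < 1 := pow_lt_one₀ h0.le h1 (by norm_num)
  have hI : theta3 (q^4) * theta4 (q^4) = theta4 (q^8)^2 := by
    have := landenI h40 h41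
    rwa [show ((q^4)^2 : ℝ) = q^8 from by ring] at this
  have hII : theta2 (q^4)^2 = 2 * theta2 (q^8) * theta3 (q^8) := by
    have := landenII h40 h41
    rwa [show ((q^4)^2 : ℝ) = q^8 from by ring] at this
  have hT2 : theta2 (q^4) = 2*q*Pf q := trivT2 h0 h1
  unfold Rf
  rw [show ((q^2)^4 : ℝ) = q^8 from by ring]
  have lhs_eq : q * (theta2 (q^4) * theta3 (q^4) * theta4 (q^4)) * Pf q
      = 2*q^2*(Pf q)^2 * theta4 (q^8)^2 := by
    calc q * (theta2 (q^4) * theta3 (q^4) * theta4 (q^4)) * Pf q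
        = q * theta2 (q^4) * Pf q * (theta3 (q^4) * theta4 (q^4)) := by ring
      _ = q * (2*q*Pf q) * Pf q * (theta4 (q^8)^2) := by rw [hT2, hI]
      _ = 2*q^2*(Pf q)^2 * theta4 (q^8)^2 := by ring
  have rhs_eq : theta2 (q^8) * theta3 (q^8) * theta4 (q^8) * theta4 (q^8)
      = 2*q^2*(Pf q)^2 * theta4 (q^8)^2 := by
    have e5 : theta2 (q^8) * theta3 (q^8) = 2*q^2*(Pf q)^2 := by
      have hsq : theta2 (q^4)^2 = (2*q*Pf q)^2 := by rw [hT2]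
      linear_combination (hsq - hII) / 2
    calc theta2 (q^8) * theta3 (q^8) * theta4 (q^8) * theta4 (q^8)
        = (theta2 (q^8) * theta3 (q^8)) * theta4 (q^8)^2 := by ring
      _ = 2*q^2*(Pf q)^2 * theta4 (q^8)^2 := by rw [e5]
  rw [lhs_eq, rhs_eq]

/-! ### Positivity -/

lemma theta3_pos (h0 : 0 < t) (h1 : t < 1) : 0 < theta3 t := by
  unfold theta3
  exact Summable.tsum_pos (summable_pure h0 h1) (fun n => Real.rpow_nonneg h0.le _) 0
    (Real.rpow_pos_of_pos h0 _)

lemma theta2_pos (h0 : 0 < t) (h1 : t < 1) : 0 < theta2 t := by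
  unfold theta2
  exact Summable.tsum_pos (summable_th2 h0 h1) (fun n => Real.rpow_nonneg h0.le _) 0
    (Real.rpow_pos_of_pos h0 _)

lemma Pf_pos (h0 : 0 < t) (h1 : t < 1) : 0 < Pf t := by
  unfold Pf
  exact Summable.tsum_pos (summable_P_nat h0 h1) (fun n => Real.rpow_nonneg h0.le _) 0
    (Real.rpow_pos_of_pos h0 _)

/-! ### Limits as t → 0⁺ -/

lemma tail_le (h0 : 0 < t) (h2 : t ≤ 1/2) {c E : ℕ → ℝ}
    (hc : ∀ n : ℕ, |c n| ≤ 2*(n:ℝ)+3) (hE : ∀ n : ℕ, (n:ℝ)+1 ≤ E n) :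
    |∑' n : ℕ, c n * t ^ E n| ≤ 12 * t := by
  have ht1 : t < 1 := by linarith
  have hsummable : Summable (fun n : ℕ => c n * t ^ E n) :=
    summable_coef h0 ht1 (fun n => le_trans (hc n) (by linarith))
      (fun n => by linarith [hE n])
  have hb : ∀ n : ℕ, ‖c n * t ^ E n‖ ≤ ((2*(n:ℝ)+3) * (1/2)^n) * t := by
    intro n
    rw [Real.norm_eq_abs, abs_mul, abs_of_nonneg (Real.rpow_nonneg h0.le _)]
    have e1 : t ^ E n ≤ t ^ ((n:ℝ)+1) := Real.rpow_le_rpow_of_exponent_ge h0 ht1.le (hE n)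
    have e2 : t ^ ((n:ℝ)+1) = t ^ n * t := by
      rw [show ((n:ℝ)+1) = ((n+1 : ℕ) : ℝ) from by push_cast; ring, Real.rpow_natCast, pow_succ]
    have e3 : t ^ n ≤ (1/2 : ℝ)^n := pow_le_pow_left₀ h0.le h2 n
    have hcn := hc n
    have h5 : (0:ℝ) ≤ t ^ E n := Real.rpow_nonneg h0.le _
    calc |c n| * t ^ E n ≤ (2*(n:ℝ)+3) * t ^ E n := by
          exact mul_le_mul_of_nonneg_right hcn h5
      _ ≤ (2*(n:ℝ)+3) * (t ^ n * t) := by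
          have := e1.trans_eq e2
          exact mul_le_mul_of_nonneg_left this (by positivity)
      _ ≤ (2*(n:ℝ)+3) * ((1/2:ℝ)^n * t) := by
          have : t^n * t ≤ (1/2:ℝ)^n * t := mul_le_mul_of_nonneg_right e3 h0.le
          exact mul_le_mul_of_nonneg_left this (by positivity)
      _ = ((2*(n:ℝ)+3) * (1/2)^n) * t := by ring
  have hs1 : Summable (fun n : ℕ => (n:ℝ)*(1/2:ℝ)^n) := by
    have := summable_pow_mul_geometric_of_norm_lt_one (R := ℝ) 1 (r := (1/2:ℝ)) (by
      rw [Real.norm_eq_abs, abs_of_pos (by norm_num : (0:ℝ) < 1/2)]; norm_num)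
    simpa using this
  have hs2 : Summable (fun n : ℕ => ((1/2:ℝ))^n) :=
    summable_geometric_of_lt_one (by norm_num) (by norm_num)
  have hsg : Summable (fun n : ℕ => ((2*(n:ℝ)+3) * (1/2:ℝ)^n) * t) := by
    apply Summable.mul_right
    apply ((hs1.mul_left 2).add (hs2.mul_left 3)).congr
    intro n; ring
  have habs : |∑' n : ℕ, c n * t ^ E n| ≤ ∑' n : ℕ, ((2*(n:ℝ)+3) * (1/2:ℝ)^n) * t := by
    calc |∑' n : ℕ, c n * t ^ E n| ≤ ∑' n : ℕ, ‖c n * t ^ E n‖ := by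
          rw [← Real.norm_eq_abs]
          exact norm_tsum_le_tsum_norm (by
            apply hsg.of_nonneg_of_le (fun n => norm_nonneg _) hb)
      _ ≤ ∑' n : ℕ, ((2*(n:ℝ)+3) * (1/2:ℝ)^n) * t := by
          apply Summable.tsum_le_tsum hb _ hsg
          apply hsg.of_nonneg_of_le (fun n => norm_nonneg _) hb
  have hC : (∑' n : ℕ, (2*(n:ℝ)+3)*(1/2:ℝ)^n) = 10 := by
    have e4 : (∑' n : ℕ, (2*(n:ℝ)+3)*(1/2:ℝ)^n)
        = 2 * (∑' n : ℕ, (n:ℝ)*(1/2:ℝ)^n) + 3 * (∑' n : ℕ, ((1/2:ℝ))^n) := by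
      rw [← tsum_mul_left, ← tsum_mul_left, ← Summable.tsum_add (hs1.mul_left 2) (hs2.mul_left 3)]
      exact tsum_congr fun n => by ring
    rw [e4, tsum_coe_mul_geometric_of_norm_lt_one
        (by rw [Real.norm_eq_abs, abs_of_pos (by norm_num : (0:ℝ) < 1/2)]; norm_num),
      tsum_geometric_of_lt_one (by norm_num) (by norm_num)]
    norm_num
  calc |∑' n : ℕ, c n * t ^ E n| ≤ ∑' n : ℕ, ((2*(n:ℝ)+3) * (1/2:ℝ)^n) * t := habs
    _ = (∑' n : ℕ, (2*(n:ℝ)+3)*(1/2:ℝ)^n) * t := by rw [tsum_mul_right]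
    _ = 10 * t := by rw [hC]
    _ ≤ 12 * t := by linarith

lemma tendsto_aux {f : ℝ → ℝ} (hf : ∀ t : ℝ, 0 < t → t ≤ 1/2 → |f t - 1| ≤ 12 * t) :
    Filter.Tendsto f (nhdsWithin 0 (Set.Ioi 0)) (nhds 1) := by
  have h1 : Filter.Tendsto (fun t : ℝ => f t - 1) (nhdsWithin 0 (Set.Ioi 0)) (nhds 0) := by
    apply squeeze_zero_norm' (a := fun t : ℝ => 12 * t)
    · filter_upwards [Ioo_mem_nhdsGT_of_mem
        (show (0:ℝ) ∈ Set.Ico (0:ℝ) (1/2) from ⟨le_refl _, by norm_num⟩)] with t ht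
      rw [Real.norm_eq_abs]
      exact hf t ht.1 ht.2.le
    · have : Filter.Tendsto (fun t : ℝ => 12 * t) (nhds (0:ℝ)) (nhds (12 * 0)) :=
        (continuous_const.mul continuous_id).tendsto 0
      rw [mul_zero] at this
      exact this.mono_left nhdsWithin_le_nhds
  have := h1.add (tendsto_const_nhds (x := (1:ℝ)))
  rw [zero_add] at this
  exact this.congr fun t => by ring

lemma L1_tail (h0 : 0 < t) (h2 : t ≤ 1/2) : |L1 t - 1| ≤ 12 * t := by
  have ht1 : t < 1 := by linarith
  have hzero : (-1:ℝ)^(0:ℕ) * (2*((0:ℕ):ℝ)+1) * t ^ ((2*((0:ℕ):ℝ)+1)^2 - 1) = 1 := by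
    norm_num
  have : L1 t = 1 + ∑' n : ℕ,
      (-1:ℝ)^(n+1) * (2*((n+1:ℕ):ℝ)+1) * t ^ ((2*((n+1:ℕ):ℝ)+1)^2 - 1) := by
    unfold L1
    rw [Summable.tsum_eq_zero_add (summable_L1_nat h0 ht1), hzero]
  rw [this]
  rw [show (1:ℝ) + _ - 1 = ∑' n : ℕ,
      (-1:ℝ)^(n+1) * (2*((n+1:ℕ):ℝ)+1) * t ^ ((2*((n+1:ℕ):ℝ)+1)^2 - 1) from by ring]
  apply tail_le h0 h2 (c := fun n => (-1:ℝ)^(n+1) * (2*((n+1:ℕ):ℝ)+1))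
    (E := fun n => (2*((n+1:ℕ):ℝ)+1)^2 - 1)
  · intro n
    rw [abs_mul, abs_pow, abs_neg, abs_one, one_pow, one_mul,
      abs_of_nonneg (by positivity : (0:ℝ) ≤ 2*((n+1:ℕ):ℝ)+1)]
    push_cast
    linarith
  · intro n
    push_cast
    nlinarith [sq_nonneg ((n:ℝ)), Nat.cast_nonneg (α := ℝ) n]

lemma Pf_tail (h0 : 0 < t) (h2 : t ≤ 1/2) : |Pf t - 1| ≤ 12 * t := by
  have ht1 : t < 1 := by linarith
  have hzero : t ^ ((2*((0:ℕ):ℝ)+1)^2 - 1) = 1 := by norm_num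
  have : Pf t = 1 + ∑' n : ℕ, t ^ ((2*((n+1:ℕ):ℝ)+1)^2 - 1) := by
    unfold Pf
    rw [Summable.tsum_eq_zero_add (summable_P_nat h0 ht1), hzero]
  rw [this, show (1:ℝ) + _ - 1 = ∑' n : ℕ, t ^ ((2*((n+1:ℕ):ℝ)+1)^2 - 1) from by ring]
  have := tail_le h0 h2 (c := fun _ : ℕ => (1:ℝ)) (E := fun n => (2*((n+1:ℕ):ℝ)+1)^2 - 1)
    (by intro n; rw [abs_one]; linarith [Nat.cast_nonneg (α := ℝ) n])
    (by intro n; push_cast; nlinarith [sq_nonneg ((n:ℝ)), Nat.cast_nonneg (α := ℝ) n])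
  calc |∑' n : ℕ, t ^ ((2*((n+1:ℕ):ℝ)+1)^2 - 1)|
      = |∑' n : ℕ, (1:ℝ) * t ^ ((2*((n+1:ℕ):ℝ)+1)^2 - 1)| := by
        congr 1; exact tsum_congr fun n => by rw [one_mul]
    _ ≤ 12 * t := this

set_option maxHeartbeats 1000000 in
/-- Two-sided theta sums minus 1, as a single ℕ-sum. -/
lemma theta_center (c : ℤ → ℝ) (hc0 : c 0 = 1) (hcneg : ∀ x, c (-x) = c x)
    (hs : Summable fun x : ℤ => c x * t ^ ((x:ℝ)^2)) :
    (∑' x : ℤ, c x * t ^ ((x:ℝ)^2))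
      = 1 + ∑' n : ℕ, (2 * c ((n:ℤ)+1)) * t ^ ((((n:ℤ)+1 : ℤ):ℝ)^2) := by
  have hnat : Summable fun n : ℕ => c n * t ^ (((n:ℤ):ℝ)^2) :=
    hs.comp_injective Nat.cast_injective
  have hinjneg : Function.Injective (fun n : ℕ => -((n:ℤ)+1)) := by
    intro a b h
    simp only [neg_inj, add_left_inj, Nat.cast_inj] at h
    exact h
  have hneg : Summable fun n : ℕ => c (-((n:ℤ)+1)) * t ^ ((((-((n:ℤ)+1)) : ℤ):ℝ)^2) :=
    hs.comp_injective hinjneg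
  have hinj1 : Function.Injective (fun n : ℕ => (n:ℤ)+1) := by
    intro a b h
    simp only [add_left_inj, Nat.cast_inj] at h
    exact h
  have hsum2 : Summable fun n : ℕ => c ((n:ℤ)+1) * t ^ ((((n:ℤ)+1 : ℤ):ℝ)^2) :=
    hs.comp_injective hinj1
  rw [tsum_of_nat_of_neg_add_one hnat hneg]
  have e1 : (∑' n : ℕ, c n * t ^ (((n:ℤ):ℝ)^2))
      = 1 + ∑' n : ℕ, c ((n:ℤ)+1) * t ^ ((((n:ℤ)+1 : ℤ):ℝ)^2) := by
    rw [Summable.tsum_eq_zero_add hnat]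
    congr 1
    simpa using hc0
  have e2 : (∑' n : ℕ, c (-((n:ℤ)+1)) * t ^ ((((-((n:ℤ)+1)) : ℤ):ℝ)^2))
      = ∑' n : ℕ, c ((n:ℤ)+1) * t ^ ((((n:ℤ)+1 : ℤ):ℝ)^2) := by
    refine tsum_congr fun n => ?_
    rw [hcneg ((n:ℤ)+1), cast_neg_sq]
  rw [e1, e2]
  have e3 : (∑' n : ℕ, c ((n:ℤ)+1) * t ^ ((((n:ℤ)+1 : ℤ):ℝ)^2))
        + (∑' n : ℕ, c ((n:ℤ)+1) * t ^ ((((n:ℤ)+1 : ℤ):ℝ)^2))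
      = ∑' n : ℕ, (2 * c ((n:ℤ)+1)) * t ^ ((((n:ℤ)+1 : ℤ):ℝ)^2) := by
    rw [← Summable.tsum_add hsum2 hsum2]
    exact tsum_congr fun n => by ring
  rw [add_assoc, e3]

lemma theta3_tail (h0 : 0 < t) (h2 : t ≤ 1/2) : |theta3 t - 1| ≤ 12 * t := by
  have ht1 : t < 1 := by linarith
  have hs : Summable fun x : ℤ => (1:ℝ) * t ^ ((x:ℝ)^2) :=
    (summable_pure h0 ht1).congr fun x => (one_mul _).symm
  have h3 : theta3 t = ∑' x : ℤ, (1:ℝ) * t ^ ((x:ℝ)^2) := by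
    unfold theta3
    exact tsum_congr fun n => (one_mul _).symm
  rw [h3, theta_center (fun _ => (1:ℝ)) rfl (fun _ => rfl) hs]
  rw [show (1:ℝ) + _ - 1 = ∑' n : ℕ, (2*(1:ℝ)) * t ^ ((((n:ℤ)+1 : ℤ):ℝ)^2) from by ring]
  apply tail_le h0 h2
  · intro n
    rw [mul_one, abs_of_nonneg (by norm_num : (0:ℝ) ≤ 2)]
    linarith [Nat.cast_nonneg (α := ℝ) n]
  · intro n
    push_cast
    nlinarith [sq_nonneg ((n:ℝ)), Nat.cast_nonneg (α := ℝ) n]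

lemma epsf_zero : epsf 0 = 1 := by unfold epsf epsZ; norm_num

lemma epsf_neg (x : ℤ) : epsf (-x) = epsf x := by unfold epsf; rw [epsZ_neg]

lemma epsf_abs_le (x : ℤ) : |epsf x| ≤ 1 := by
  unfold epsf; rw [← Int.cast_abs, epsZ_abs]; norm_num

lemma theta4_tail (h0 : 0 < t) (h2 : t ≤ 1/2) : |theta4 t - 1| ≤ 12 * t := by
  have ht1 : t < 1 := by linarith
  rw [theta4_eq, theta_center epsf epsf_zero epsf_neg (summable_eps h0 ht1)]
  rw [show (1:ℝ) + _ - 1 = ∑' n : ℕ, (2*epsf ((n:ℤ)+1)) * t ^ ((((n:ℤ)+1 : ℤ):ℝ)^2) from by ring]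
  apply tail_le h0 h2
  · intro n
    rw [abs_mul, abs_of_nonneg (by norm_num : (0:ℝ) ≤ 2)]
    have := epsf_abs_le ((n:ℤ)+1)
    nlinarith [Nat.cast_nonneg (α := ℝ) n]
  · intro n
    push_cast
    nlinarith [sq_nonneg ((n:ℝ)), Nat.cast_nonneg (α := ℝ) n]

lemma tendsto_L1 : Filter.Tendsto L1 (nhdsWithin 0 (Set.Ioi 0)) (nhds 1) :=
  tendsto_aux fun t ht0 ht2 => L1_tail ht0 ht2

lemma tendsto_Pf : Filter.Tendsto Pf (nhdsWithin 0 (Set.Ioi 0)) (nhds 1) :=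
  tendsto_aux fun t ht0 ht2 => Pf_tail ht0 ht2

lemma tendsto_theta3 : Filter.Tendsto theta3 (nhdsWithin 0 (Set.Ioi 0)) (nhds 1) :=
  tendsto_aux fun t ht0 ht2 => theta3_tail ht0 ht2

lemma tendsto_theta4 : Filter.Tendsto theta4 (nhdsWithin 0 (Set.Ioi 0)) (nhds 1) :=
  tendsto_aux fun t ht0 ht2 => theta4_tail ht0 ht2

lemma tendsto_pow4 : Filter.Tendsto (fun t : ℝ => t^4)
    (nhdsWithin 0 (Set.Ioi 0)) (nhdsWithin 0 (Set.Ioi 0)) := by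
  apply tendsto_nhdsWithin_of_tendsto_nhds_of_eventually_within
  · have : Filter.Tendsto (fun t : ℝ => t^4) (nhds 0) (nhds ((0:ℝ)^4)) :=
      (continuous_pow 4).tendsto (0:ℝ)
    rw [show ((0:ℝ)^4) = 0 from by norm_num] at this
    exact this.mono_left nhdsWithin_le_nhds
  · filter_upwards [self_mem_nhdsWithin] with t ht
    exact pow_pos (Set.mem_Ioi.mp ht) 4

lemma tendsto_seq (h0 : 0 < q) (h1 : q < 1) :
    Filter.Tendsto (fun k : ℕ => q^(2^k)) Filter.atTop (nhdsWithin 0 (Set.Ioi 0)) := by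
  apply tendsto_nhdsWithin_of_tendsto_nhds_of_eventually_within
  · exact (tendsto_pow_atTop_nhds_zero_of_lt_one h0.le h1).comp
      (tendsto_pow_atTop_atTop_of_one_lt one_lt_two)
  · exact Filter.Eventually.of_forall fun k => pow_pos h0 _

lemma theta4_ne (h0 : 0 < t) (h1 : t < 1) : theta4 t ≠ 0 := by
  intro hzero
  have hiter : ∀ k : ℕ, theta4 (t^(2^k)) = 0 := by
    intro k
    induction k with
    | zero => simpa using hzero
    | succ k ih =>
      have hk0 : 0 < t^(2^k) := pow_pos h0 _
      have hk1 : t^(2^k) < 1 := pow_lt_one₀ h0.le h1 (by positivity)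
      have hI := landenI hk0 hk1
      rw [ih, mul_zero] at hI
      have h4 : theta4 ((t^(2^k))^2) = 0 := by
        have := hI.symm
        exact pow_eq_zero_iff (by norm_num) |>.mp this
      rwa [show ((t^(2^k))^2 : ℝ) = t^(2^(k+1)) from by rw [← pow_mul, pow_succ]] at h4
  have hT : Filter.Tendsto (fun k : ℕ => theta4 (t^(2^k))) Filter.atTop (nhds 1) :=
    tendsto_theta4.comp (tendsto_seq h0 h1)
  have hT0 : Filter.Tendsto (fun k : ℕ => theta4 (t^(2^k))) Filter.atTop (nhds 0) := by
    apply Filter.Tendsto.congr (fun k => (hiter k).symm)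
    exact tendsto_const_nhds
  have := tendsto_nhds_unique hT hT0
  norm_num at this

lemma theta4_pos (h0 : 0 < t) (h1 : t < 1) : 0 < theta4 t := by
  have hI := landenI h0 h1
  have h3 := theta3_pos h0 h1
  have hne := theta4_ne h0 h1
  rcases lt_or_gt_of_ne hne with hlt | hgt
  · exfalso
    have : theta3 t * theta4 t < 0 := mul_neg_of_pos_of_neg h3 hlt
    rw [hI] at this
    exact absurd this (not_lt.mpr (sq_nonneg _))
  · exact hgt

lemma Rf_pos (h0 : 0 < t) (h1 : t < 1) : 0 < Rf t := by
  have h40 : 0 < t^4 := by positivity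
  have h41 : t^4 < 1 := pow_lt_one₀ h0.le h1 (by norm_num)
  exact mul_pos (mul_pos (theta2_pos h40 h41) (theta3_pos h40 h41)) (theta4_pos h40 h41)

lemma Lf_eq (h0 : 0 < t) : Lf t = 2*t*L1 t := by
  unfold Lf L1
  have hterm : ∀ n : ℕ, (-1:ℝ)^n * (2*(n:ℝ)+1) * t ^ ((2*(n:ℝ)+1)^2)
      = t * ((-1:ℝ)^n * (2*(n:ℝ)+1) * t ^ ((2*(n:ℝ)+1)^2 - 1)) := by
    intro n
    rw [show ((2*(n:ℝ)+1)^2) = 1 + ((2*(n:ℝ)+1)^2 - 1) from by ring,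
      Real.rpow_add h0, Real.rpow_one]
    ring
  rw [tsum_congr hterm, tsum_mul_left]
  ring

lemma Rf_eq (h0 : 0 < t) (h1 : t < 1) :
    Rf t = 2*t*(Pf t * (theta3 (t^4) * theta4 (t^4))) := by
  unfold Rf
  rw [trivT2 h0 h1]
  ring

lemma tendsto_ratio :
    Filter.Tendsto (fun t : ℝ => Lf t / Rf t) (nhdsWithin 0 (Set.Ioi 0)) (nhds 1) := by
  have hc3 : Filter.Tendsto (fun t : ℝ => theta3 (t^4))
      (nhdsWithin 0 (Set.Ioi 0)) (nhds 1) := tendsto_theta3.comp tendsto_pow4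
  have hc4 : Filter.Tendsto (fun t : ℝ => theta4 (t^4))
      (nhdsWithin 0 (Set.Ioi 0)) (nhds 1) := tendsto_theta4.comp tendsto_pow4
  have hden : Filter.Tendsto (fun t : ℝ => Pf t * (theta3 (t^4) * theta4 (t^4)))
      (nhdsWithin 0 (Set.Ioi 0)) (nhds 1) := by
    have := tendsto_Pf.mul (hc3.mul hc4)
    rw [show (1:ℝ) * (1 * 1) = 1 from by norm_num] at this
    exact this
  have hdiv := Filter.Tendsto.div tendsto_L1 hden one_ne_zero
  rw [show (1:ℝ)/1 = 1 from by norm_num] at hdiv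
  apply hdiv.congr'
  filter_upwards [Ioo_mem_nhdsGT_of_mem
    (show (0:ℝ) ∈ Set.Ico (0:ℝ) 1 from ⟨le_refl _, one_pos⟩)] with t ht
  obtain ⟨ht0, ht1⟩ := ht
  rw [Lf_eq ht0, Rf_eq ht0 ht1,
    mul_div_mul_left _ _ (by positivity : (2:ℝ)*t ≠ 0)]
  rfl

/-- The descent step: L/R is invariant under q ↦ q². -/
lemma descent (h0 : 0 < t) (h1 : t < 1) : Lf t / Rf t = Lf (t^2) / Rf (t^2) := by
  have h20 : 0 < t^2 := by positivity
  have h21 : t^2 < 1 := pow_lt_one₀ h0.le h1 (by norm_num)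
  have h80 : 0 < t^8 := by positivity
  have h81 : t^8 < 1 := pow_lt_one₀ h0.le h1 (by norm_num)
  have k1 := key1 h0 h1
  have k2 := key2 h0 h1
  have h4pos := theta4_pos h80 h81
  have hPpos := Pf_pos h0 h1
  have hcross : Lf t * Rf (t^2) = Lf (t^2) * Rf t := by
    have e0 : theta4 (t^8) * (Lf (t^2) * Rf t) = theta4 (t^8) * (Rf (t^2) * Lf t) := by
      have e1 : (t*Lf t*Pf t) * Rf t = (Lf (t^2) * theta4 (t^8)) * Rf t := by rw [k1]
      have e2 : (t*Rf t*Pf t) * Lf t = (Rf (t^2) * theta4 (t^8)) * Lf t := by rw [k2]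
      linear_combination e2 - e1
    have := mul_left_cancel₀ h4pos.ne' e0
    linear_combination -this
  rw [div_eq_div_iff (Rf_pos h0 h1).ne' (Rf_pos h20 h21).ne']
  linear_combination hcross

lemma main_eq (h0 : 0 < q) (h1 : q < 1) : Lf q = Rf q := by
  have hiter : ∀ k : ℕ, Lf q / Rf q = Lf (q^(2^k)) / Rf (q^(2^k)) := by
    intro k
    induction k with
    | zero => simp
    | succ k ih =>
      have hk0 : 0 < q^(2^k) := pow_pos h0 _
      have hk1 : q^(2^k) < 1 := pow_lt_one₀ h0.le h1 (by positivity)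
      rw [ih, descent hk0 hk1,
        show ((q^(2^k))^2 : ℝ) = q^(2^(k+1)) from by rw [← pow_mul, pow_succ]]
  have hlim : Filter.Tendsto (fun k : ℕ => Lf (q^(2^k)) / Rf (q^(2^k)))
      Filter.atTop (nhds 1) := tendsto_ratio.comp (tendsto_seq h0 h1)
  have hconst : Filter.Tendsto (fun k : ℕ => Lf (q^(2^k)) / Rf (q^(2^k)))
      Filter.atTop (nhds (Lf q / Rf q)) := by
    apply Filter.Tendsto.congr (fun k => hiter k)
    exact tendsto_const_nhds
  have hone : Lf q / Rf q = 1 := tendsto_nhds_unique hconst hlim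
  have hR := (Rf_pos h0 h1).ne'
  field_simp at hone
  exact hone

end

end Jacobi3

theorem stmt3 (q : ℝ) (hq0 : 0 < q) (hq1 : q < 1) :
    2 * ∑' n : ℕ, (-1 : ℝ) ^ n * (2 * n + 1) * q ^ ((2 * n + 1) ^ 2) =
      theta2 (q ^ 4) * theta3 (q ^ 4) * theta4 (q ^ 4) := by
  have hmain := Jacobi3.main_eq hq0 hq1
  calc 2 * ∑' n : ℕ, (-1 : ℝ) ^ n * (2 * n + 1) * q ^ ((2 * n + 1) ^ 2)
      = Jacobi3.Lf q := by
        unfold Jacobi3.Lf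
        congr 1
        refine tsum_congr fun n => ?_
        congr 1
        rw [← Real.rpow_natCast q ((2 * n + 1) ^ 2)]
        congr 1
        push_cast
        ring
    _ = Jacobi3.Rf q := hmain
    _ = theta2 (q ^ 4) * theta3 (q ^ 4) * theta4 (q ^ 4) := rfl
end

section
/- For 0 < q < 1, θ₃(q)^2 = 1 + 4 ∑_{n=1}^∞ q^n / (1 + q^{2n}). -/
/-!
Expanding the square, `θ₃(q)² = ∑_{(a,b) ∈ ℤ²} q^(a² + b²) = ∑_N r₂(N) q^N`, where `r₂(N)` counts
the Gaussian integers of norm `N`. Expanding `q^n / (1 + q^(2n)) = ∑_{d odd} χ₄(d) q^(nd)` turns the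
right-hand side into the Lambert series `1 + 4 ∑_N (∑_{d ∣ N} χ₄(d)) q^N`, so the identity is
Jacobi's two-square theorem `r₂(N) = 4 ∑_{d ∣ N} χ₄(d)` for `N ≥ 1`.

The divisor sum is multiplicative, so it suffices that `r₂(p^e M) = (∑_{i ≤ e} χ₄(p)^i) r₂(M)`
whenever `p ∤ M`. This is read off from the factorisation of `p` in `ℤ[i]`: `1 + i` divides every
element of even norm; a prime `p ≡ 3 (mod 4)` stays prime, so it divides every element whose norm it
divides; and a prime `p ≡ 1 (mod 4)` splits as `π π̄` with `π, π̄` not associated, and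
inclusion–exclusion over the multiples of `π` and of `π̄` gives
`r₂(pK) + #{z : p ∣ z, N(z) = pK} = 2 r₂(K)`.
-/

open Finset ZMod

local notation "ℤ[i]" => GaussianInt

theorem HasSum.ncard_fiber_nsmul {α β G : Type*} [AddCommGroup G] [UniformSpace G]
    [IsUniformAddGroup G] [CompleteSpace G] [T2Space G] {g : α → β} {u : β → G} {s : G}
    (h : HasSum (fun a => u (g a)) s) : HasSum (fun b => (g ⁻¹' {b}).ncard • u b) s := by
  convert h.tsum_fiberwise g using 2 with b
  rw [tsum_congr fun x : g ⁻¹' {b} => congrArg u x.2, tsum_const, Nat.card_coe_set_eq]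

theorem hasSum_sum_divisors_mul_pow {𝕜 : Type*} [NormedField 𝕜] [CompleteSpace 𝕜]
    {a : ℕ → 𝕜} {C : ℝ} {r : 𝕜} {L : ℕ+ → 𝕜} (ha : ∀ d, ‖a d‖ ≤ C)
    (hr : ‖r‖ < 1) (hL : ∀ n : ℕ+, HasSum (fun d : ℕ+ => a d * r ^ (n * d : ℕ)) (L n)) :
    HasSum (fun N : ℕ+ => (∑ d ∈ (N : ℕ).divisors, a d) * r ^ (N : ℕ)) (∑' n, L n) := by
  -- Sum the absolutely convergent double series `∑_{n,d} a d r^(nd)` by rows, then along the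
  -- divisor antidiagonals `nd = N`.
  set F : ℕ+ × ℕ+ → 𝕜 := fun c => a c.2 * r ^ (c.1 * c.2 : ℕ)
  have hF : Summable F := by
    have hnorm := (summable_prod_mul_pow (𝕜 := ℝ) 0 (r := ‖r‖) (by simpa using hr)).mul_left C
    refine Summable.of_norm_bounded hnorm fun c => ?_
    simpa [F, norm_mul, norm_pow] using
      mul_le_mul_of_nonneg_right (ha c.2) (pow_nonneg (norm_nonneg r) (c.1 * c.2 : ℕ))
  have hFL : HasSum F (∑' n, L n) := (hF.hasSum.prod_fiberwise hL).tsum_eq ▸ hF.hasSum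
  refine ((sigmaAntidiagonalEquivProd.hasSum_iff).2 hFL).sigma fun N => ?_
  have hterm (x : (N : ℕ).divisorsAntidiagonal) :
      (F ∘ sigmaAntidiagonalEquivProd) ⟨N, x⟩ = a x.1.2 * r ^ (N : ℕ) := by
    simp [F, sigmaAntidiagonalEquivProd, divisorsAntidiagonalFactors,
      (Nat.mem_divisorsAntidiagonal.1 x.2).1]
  have hsum : ∑ x : (N : ℕ).divisorsAntidiagonal, a x.1.2 * r ^ (N : ℕ) =
      (∑ d ∈ (N : ℕ).divisors, a d) * r ^ (N : ℕ) := by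
    rw [Finset.sum_coe_sort (N : ℕ).divisorsAntidiagonal (fun x => a x.2 * r ^ (N : ℕ)),
      Nat.sum_divisorsAntidiagonal' (fun _ d => a d * r ^ (N : ℕ)), Finset.sum_mul]
  exact hsum ▸ (hasSum_fintype _).congr_fun hterm

theorem hasSum_χ₄_mul_pow {𝕜 : Type*} [NormedField 𝕜] {x : 𝕜} (hx : ‖x‖ < 1) :
    HasSum (fun d : ℕ+ => (χ₄ d : 𝕜) * x ^ (d : ℕ)) (x / (1 + x ^ 2)) := by
  have hgeom : HasSum (fun k : ℕ => (-1) ^ k * x ^ (2 * k + 1)) (x / (1 + x ^ 2)) := by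
    have hx2 : ‖-x ^ 2‖ < 1 := by simpa using pow_lt_one₀ (norm_nonneg x) hx two_ne_zero
    have h := (hasSum_geometric_of_norm_lt_one hx2).mul_left x
    rw [sub_neg_eq_add, ← div_eq_mul_inv] at h
    exact h.congr_fun fun k => by rw [neg_pow, pow_succ, pow_mul]; ring
  -- `χ₄` vanishes on even numbers and `χ₄ (2k + 1) = (-1)^k`.
  have hodd : Function.Injective fun k : ℕ => (2 * k).succPNat := fun k l h => by
    simpa using congrArg PNat.val h
  rw [← hodd.hasSum_iff]
  · refine hgeom.congr_fun fun k => ?_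
    rw [Function.comp_apply, Nat.succPNat_coe, χ₄_eq_neg_one_pow (by omega),
      show (2 * k).succ / 2 = k by omega]
    push_cast
    rfl
  · rintro d hd
    have heven : (d : ℕ) % 2 = 0 := by
      by_contra h
      exact hd ⟨(d : ℕ) / 2, PNat.eq (by simp; omega)⟩
    rw [χ₄_nat_eq_if_mod_four, if_pos heven, Int.cast_zero, zero_mul]

theorem ArithmeticFunction.IsMultiplicative.eq_mul_apply_one_of_prime_pow_mul {R : Type*}
    [CommMonoidWithZero R] {g : ArithmeticFunction R} (hg : g.IsMultiplicative) {f : ℕ → R}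
    (hf : ∀ p e M, p.Prime → ¬p ∣ M → f (p ^ e * M) = g (p ^ e) * f M) {N : ℕ} (hN : N ≠ 0) :
    f N = g N * f 1 := by
  induction N using Nat.strong_induction_on with
  | _ N ih =>
  rcases eq_or_ne N 1 with rfl | hN1
  · rw [hg.map_one, one_mul]
  have hp := Nat.minFac_prime hN1
  obtain ⟨e, M, hpM, hNeq⟩ := Nat.exists_eq_pow_mul_and_not_dvd hN _ hp.ne_one
  have he : e ≠ 0 := by
    rintro rfl
    rw [pow_zero, one_mul] at hNeq
    exact hpM (hNeq ▸ Nat.minFac_dvd N)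
  have hM : M ≠ 0 := by
    rintro rfl
    exact hN (by rw [hNeq, mul_zero])
  have hMN : M < N := hNeq ▸ lt_mul_of_one_lt_left (Nat.pos_of_ne_zero hM)
    (Nat.one_lt_pow he hp.one_lt)
  rw [hNeq, hf _ _ _ hp hpM, ih M hMN hM, ← mul_assoc,
    ← hg.map_mul_of_coprime (Nat.Coprime.pow_left e (hp.coprime_iff_not_dvd.2 hpM))]

open scoped ArithmeticFunction.zeta in
def χ₄DivisorSum : ArithmeticFunction ℤ := ζ * toArithmeticFunction (χ₄ ·)

theorem isMultiplicative_χ₄DivisorSum : χ₄DivisorSum.IsMultiplicative :=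
  ArithmeticFunction.isMultiplicative_zeta.natCast.mul
    (DirichletCharacter.isMultiplicative_toArithmeticFunction χ₄)

theorem χ₄DivisorSum_apply (n : ℕ) : χ₄DivisorSum n = ∑ d ∈ n.divisors, χ₄ d := by
  rw [χ₄DivisorSum, ArithmeticFunction.coe_zeta_mul_apply]
  exact Finset.sum_congr rfl fun d hd => if_neg (Nat.ne_of_gt (Nat.pos_of_mem_divisors hd))

theorem χ₄DivisorSum_prime_pow {p : ℕ} (hp : p.Prime) (e : ℕ) :
    χ₄DivisorSum (p ^ e) = ∑ i ∈ range (e + 1), χ₄ p ^ i := by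
  simp only [χ₄DivisorSum_apply, Nat.sum_divisors_prime_pow hp, Nat.cast_pow, map_pow]

namespace GaussianInt

def prodEquiv : ℤ × ℤ ≃ ℤ[i] where
  toFun p := ⟨p.1, p.2⟩
  invFun z := (z.re, z.im)
  left_inv _ := rfl
  right_inv _ := rfl

theorem natAbs_norm_mul (z w : ℤ[i]) :
    (z * w).norm.natAbs = z.norm.natAbs * w.norm.natAbs := by
  rw [Zsqrtd.norm_mul, Int.natAbs_mul]

theorem natAbs_norm_natCast (n : ℕ) : (n : ℤ[i]).norm.natAbs = n * n := by
  rw [Zsqrtd.norm_natCast, Int.natAbs_mul, Int.natAbs_natCast]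

theorem natCast_natAbs_norm_eq_mul_star (z : ℤ[i]) : (z.norm.natAbs : ℤ[i]) = z * star z := by
  rw [natCast_natAbs_norm, Zsqrtd.norm_eq_mul_conj]

theorem natAbs_norm_eq_one_iff {z : ℤ[i]} :
    z.norm.natAbs = 1 ↔ z = ⟨1, 0⟩ ∨ z = ⟨-1, 0⟩ ∨ z = ⟨0, 1⟩ ∨ z = ⟨0, -1⟩ := by
  obtain ⟨a, b⟩ := z
  rw [natAbs_norm_eq]
  simp only [Zsqrtd.mk.injEq]
  constructor
  · intro h
    have ha : a.natAbs ≤ 1 := by nlinarith [Nat.le_mul_self a.natAbs]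
    have hb : b.natAbs ≤ 1 := by nlinarith [Nat.le_mul_self b.natAbs]
    have ha' : a = -1 ∨ a = 0 ∨ a = 1 := by omega
    have hb' : b = -1 ∨ b = 0 ∨ b = 1 := by omega
    rcases ha' with rfl | rfl | rfl <;> rcases hb' with rfl | rfl | rfl <;> simp_all
  · rintro (⟨rfl, rfl⟩ | ⟨rfl, rfl⟩ | ⟨rfl, rfl⟩ | ⟨rfl, rfl⟩) <;> rfl

theorem finite_setOf_natAbs_norm_eq (n : ℕ) : {z : ℤ[i] | z.norm.natAbs = n}.Finite := by
  refine (((Set.finite_Icc (-(n : ℤ)) n).prod (Set.finite_Icc (-(n : ℤ)) n)).image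
    prodEquiv).subset fun z hz => ⟨(z.re, z.im), ?_, rfl⟩
  have hz' : z.re.natAbs * z.re.natAbs + z.im.natAbs * z.im.natAbs = n := by
    rw [← natAbs_norm_eq]; exact hz
  have hre : z.re.natAbs ≤ n := by nlinarith [Nat.le_mul_self z.re.natAbs]
  have him : z.im.natAbs ≤ n := by nlinarith [Nat.le_mul_self z.im.natAbs]
  simp only [Set.mem_prod, Set.mem_Icc]
  omega

theorem prime_of_natAbs_norm_prime {π : ℤ[i]} (h : π.norm.natAbs.Prime) : Prime π := by
  refine irreducible_iff_prime.1
    ⟨fun hu => h.ne_one (Zsqrtd.norm_eq_one_iff.2 hu), fun a b hab => ?_⟩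
  rw [hab, natAbs_norm_mul, Nat.prime_mul_iff] at h
  exact h.symm.imp (fun h => Zsqrtd.norm_eq_one_iff.1 h.2) fun h => Zsqrtd.norm_eq_one_iff.1 h.2

theorem _root_.Prime.dvd_or_star_dvd_of_dvd_natAbs_norm {π z : ℤ[i]} (hπ : Prime π)
    (h : π ∣ (z.norm.natAbs : ℤ[i])) : π ∣ z ∨ star π ∣ z := by
  rw [natCast_natAbs_norm_eq_mul_star] at h
  exact (hπ.dvd_or_dvd h).imp_right fun h => by
    simpa [starRingEnd_apply] using map_dvd (starRingEnd ℤ[i]) h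

end GaussianInt

open GaussianInt

noncomputable def r₂ (n : ℕ) : ℕ := {z : ℤ[i] | z.norm.natAbs = n}.ncard

theorem ncard_dvd_and_natAbs_norm_eq {π : ℤ[i]} (hπ : π ≠ 0) (K : ℕ) :
    {z : ℤ[i] | π ∣ z ∧ z.norm.natAbs = π.norm.natAbs * K}.ncard = r₂ K := by
  have hpos : 0 < π.norm.natAbs := Int.natAbs_pos.2 (norm_pos.2 hπ).ne'
  have himage : {z : ℤ[i] | π ∣ z ∧ z.norm.natAbs = π.norm.natAbs * K} =
      (π * ·) '' {w | w.norm.natAbs = K} := by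
    ext z
    constructor
    · rintro ⟨⟨w, rfl⟩, hw⟩
      exact ⟨w, Nat.eq_of_mul_eq_mul_left hpos (by rwa [natAbs_norm_mul] at hw), rfl⟩
    · rintro ⟨w, hw, rfl⟩
      exact ⟨dvd_mul_right π w, by rw [natAbs_norm_mul, hw]⟩
  rw [himage, Set.ncard_image_of_injective _ (mul_right_injective₀ hπ), r₂]

theorem r₂_natAbs_norm_mul {π : ℤ[i]} (hπ : π ≠ 0) {K : ℕ}
    (h : ∀ z : ℤ[i], z.norm.natAbs = π.norm.natAbs * K → π ∣ z) :
    r₂ (π.norm.natAbs * K) = r₂ K := by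
  rw [← ncard_dvd_and_natAbs_norm_eq hπ K, r₂]
  congr 1
  ext z
  exact ⟨fun hz => ⟨h z hz, hz⟩, And.right⟩

theorem setOf_natCast_dvd_and_natAbs_norm_eq_eq_empty {p K : ℕ} (hp : p ≠ 0) (hpK : ¬p ∣ K) :
    {z : ℤ[i] | (p : ℤ[i]) ∣ z ∧ z.norm.natAbs = p * K} = ∅ := by
  refine Set.eq_empty_of_forall_notMem fun z ⟨⟨w, hw⟩, hz⟩ => hpK ⟨w.norm.natAbs, ?_⟩
  rw [hw, natAbs_norm_mul, natAbs_norm_natCast, mul_assoc] at hz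
  exact (Nat.eq_of_mul_eq_mul_left (Nat.pos_of_ne_zero hp) hz).symm

theorem r₂_two_mul (K : ℕ) : r₂ (2 * K) = r₂ K := by
  set π : ℤ[i] := ⟨1, 1⟩
  have hnorm : π.norm.natAbs = 2 := rfl
  have hπ : Prime π := prime_of_natAbs_norm_prime (hnorm ▸ Nat.prime_two)
  rw [← hnorm]
  refine r₂_natAbs_norm_mul hπ.ne_zero fun z hz => ?_
  have hdvd : π ∣ (z.norm.natAbs : ℤ[i]) := by
    rw [hz, Nat.cast_mul, natCast_natAbs_norm_eq_mul_star, mul_assoc]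
    exact dvd_mul_right π _
  -- `star (1 + i) = (1 + i) * (-i)`
  exact (hπ.dvd_or_star_dvd_of_dvd_natAbs_norm hdvd).elim id
    fun h => (Dvd.intro ⟨0, -1⟩ rfl).trans h

theorem natCast_dvd_of_dvd_natAbs_norm {p : ℕ} (hp : p.Prime) (hp3 : p % 4 = 3) {z : ℤ[i]}
    (h : p ∣ z.norm.natAbs) : (p : ℤ[i]) ∣ z := by
  have := Fact.mk hp
  have hπ : Prime (p : ℤ[i]) := (prime_iff_mod_four_eq_three_of_nat_prime p).2 hp3
  simpa using hπ.dvd_or_star_dvd_of_dvd_natAbs_norm (Nat.cast_dvd_cast h)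

theorem r₂_prime_mul_of_not_dvd_of_mod_four_eq_three {p K : ℕ} (hp : p.Prime) (hp3 : p % 4 = 3)
    (hpK : ¬p ∣ K) : r₂ (p * K) = 0 := by
  have hempty : {z : ℤ[i] | z.norm.natAbs = p * K} = ∅ := by
    rw [← setOf_natCast_dvd_and_natAbs_norm_eq_eq_empty hp.ne_zero hpK]
    ext z
    exact ⟨fun hz => ⟨natCast_dvd_of_dvd_natAbs_norm hp hp3 (hz ▸ dvd_mul_right p K), hz⟩,
      And.right⟩
  rw [r₂, hempty, Set.ncard_empty]

theorem r₂_prime_sq_mul_of_mod_four_eq_three {p : ℕ} (hp : p.Prime) (hp3 : p % 4 = 3) (K : ℕ) :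
    r₂ (p ^ 2 * K) = r₂ K := by
  have hnorm : (p : ℤ[i]).norm.natAbs = p ^ 2 := by rw [natAbs_norm_natCast, sq]
  rw [← hnorm]
  refine r₂_natAbs_norm_mul (Nat.cast_ne_zero.2 hp.ne_zero) fun z hz => ?_
  rw [hnorm] at hz
  exact natCast_dvd_of_dvd_natAbs_norm hp hp3 (hz ▸ (dvd_pow_self p two_ne_zero).mul_right K)

theorem exists_prime_natAbs_norm_eq_of_mod_four_eq_one {p : ℕ} (hp : p.Prime) (hp1 : p % 4 = 1) :
    ∃ π : ℤ[i], π.norm.natAbs = p ∧ Prime π ∧ ¬star π ∣ π := by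
  have := Fact.mk hp
  obtain ⟨a, b, hab⟩ := Nat.Prime.sq_add_sq (p := p) (by omega)
  have hnorm : (⟨a, b⟩ : ℤ[i]).norm.natAbs = p := by
    rw [natAbs_norm_eq, ← hab]
    simp [sq]
  refine ⟨⟨a, b⟩, hnorm, prime_of_natAbs_norm_prime (hnorm ▸ hp), ?_⟩
  rintro ⟨u, hu⟩
  have hu1 : u.norm.natAbs = 1 := by
    have h := congrArg (fun z : ℤ[i] => z.norm.natAbs) hu
    simp only [natAbs_norm_mul, Zsqrtd.norm_conj, hnorm] at h
    exact (Nat.eq_of_mul_eq_mul_left hp.pos (h.symm.trans (mul_one p).symm))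
  have hsq (c : ℕ) : c ^ 2 ≠ p := fun h => absurd ((Nat.Prime.pow_eq_iff hp).1 h).2 (by norm_num)
  -- `u` is one of `±1, ±i`, which forces `b = 0`, `a = 0`, `a = b` or `a = b = 0` respectively
  rcases natAbs_norm_eq_one_iff.1 hu1 with rfl | rfl | rfl | rfl <;>
    simp only [Zsqrtd.star_mk, Zsqrtd.ext_iff, Zsqrtd.re_mul, Zsqrtd.im_mul, Int.reduceNeg,
      mul_one, mul_neg, neg_mul, one_mul, neg_neg, mul_zero, add_zero, zero_add,
      Nat.cast_eq_neg_cast, Nat.cast_inj, and_self, true_and, and_true] at hu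
  · exact hsq a (by simpa [hu] using hab)
  · exact hsq b (by simpa [hu] using hab)
  · rw [hu.1] at hab
    omega
  · obtain ⟨⟨rfl, rfl⟩, -⟩ := hu
    exact hp.ne_zero (by simpa using hab.symm)

theorem r₂_prime_mul_add_ncard_of_mod_four_eq_one {p : ℕ} (hp : p.Prime) (hp1 : p % 4 = 1)
    (K : ℕ) :
    r₂ (p * K) + {z : ℤ[i] | (p : ℤ[i]) ∣ z ∧ z.norm.natAbs = p * K}.ncard = 2 * r₂ K := by
  obtain ⟨π, hnorm, hπ, hnot⟩ := exists_prime_natAbs_norm_eq_of_mod_four_eq_one hp hp1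
  have hnorm' : (star π).norm.natAbs = p := by rw [Zsqrtd.norm_conj, hnorm]
  have hπ' : Prime (star π) := prime_of_natAbs_norm_prime (hnorm' ▸ hp)
  have hp_eq : (p : ℤ[i]) = π * star π := by rw [← hnorm, natCast_natAbs_norm_eq_mul_star]
  set A := {z : ℤ[i] | π ∣ z ∧ z.norm.natAbs = π.norm.natAbs * K}
  set B := {z : ℤ[i] | star π ∣ z ∧ z.norm.natAbs = (star π).norm.natAbs * K}
  have hunion : {z : ℤ[i] | z.norm.natAbs = p * K} = A ∪ B := by
    ext z
    simp only [A, B, hnorm, hnorm', Set.mem_union, Set.mem_ofPred_eq, ← or_and_right]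
    refine ⟨fun hz => ⟨hπ.dvd_or_star_dvd_of_dvd_natAbs_norm ?_, hz⟩, And.right⟩
    rw [hz, Nat.cast_mul, hp_eq, mul_assoc]
    exact dvd_mul_right π _
  have hinter : A ∩ B = {z : ℤ[i] | (p : ℤ[i]) ∣ z ∧ z.norm.natAbs = p * K} := by
    ext z
    simp only [A, B, hnorm, hnorm', Set.mem_inter_iff, Set.mem_ofPred_eq]
    constructor
    · rintro ⟨⟨⟨w, rfl⟩, hz⟩, hdvd, -⟩
      obtain ⟨v, rfl⟩ := (hπ'.dvd_or_dvd hdvd).resolve_left hnot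
      exact ⟨⟨v, by rw [hp_eq, mul_assoc]⟩, hz⟩
    · rintro ⟨hdvd, hz⟩
      rw [hp_eq] at hdvd
      exact ⟨⟨(dvd_mul_right π _).trans hdvd, hz⟩, (dvd_mul_left _ π).trans hdvd, hz⟩
  have hfin := finite_setOf_natAbs_norm_eq (p * K)
  rw [hunion] at hfin
  rw [r₂, hunion, ← hinter, Set.ncard_union_add_ncard_inter _ _ (hfin.subset Set.subset_union_left)
    (hfin.subset Set.subset_union_right), ncard_dvd_and_natAbs_norm_eq hπ.ne_zero,
    ncard_dvd_and_natAbs_norm_eq hπ'.ne_zero, two_mul]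

theorem r₂_prime_mul_of_not_dvd_of_mod_four_eq_one {p K : ℕ} (hp : p.Prime) (hp1 : p % 4 = 1)
    (hpK : ¬p ∣ K) : r₂ (p * K) = 2 * r₂ K := by
  simpa [setOf_natCast_dvd_and_natAbs_norm_eq_eq_empty hp.ne_zero hpK] using
    r₂_prime_mul_add_ncard_of_mod_four_eq_one hp hp1 K

theorem r₂_prime_sq_mul_add_of_mod_four_eq_one {p : ℕ} (hp : p.Prime) (hp1 : p % 4 = 1)
    (K : ℕ) : r₂ (p ^ 2 * K) + r₂ K = 2 * r₂ (p * K) := by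
  have h := r₂_prime_mul_add_ncard_of_mod_four_eq_one hp hp1 (p * K)
  rwa [← mul_assoc, ← natAbs_norm_natCast,
    ncard_dvd_and_natAbs_norm_eq (Nat.cast_ne_zero.2 hp.ne_zero), natAbs_norm_natCast, ← sq] at h

theorem r₂_two_pow_mul (e M : ℕ) : r₂ (2 ^ e * M) = r₂ M := by
  induction e with
  | zero => rw [pow_zero, one_mul]
  | succ e ih => rw [pow_succ', mul_assoc, r₂_two_mul, ih]

theorem r₂_prime_pow_mul_of_mod_four_eq_three {p M : ℕ} (hp : p.Prime) (hp3 : p % 4 = 3)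
    (hpM : ¬p ∣ M) (e : ℕ) : r₂ (p ^ e * M) = if Even e then r₂ M else 0 := by
  induction e using Nat.twoStepInduction with
  | zero => simp
  | one => simp [r₂_prime_mul_of_not_dvd_of_mod_four_eq_three hp hp3 hpM]
  | more e ih _ =>
    rw [pow_add, mul_comm (p ^ e), mul_assoc, r₂_prime_sq_mul_of_mod_four_eq_three hp hp3, ih]
    simp [Nat.even_add]

theorem r₂_prime_pow_mul_of_mod_four_eq_one {p M : ℕ} (hp : p.Prime) (hp1 : p % 4 = 1)
    (hpM : ¬p ∣ M) (e : ℕ) : r₂ (p ^ e * M) = (e + 1) * r₂ M := by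
  induction e using Nat.twoStepInduction with
  | zero => simp
  | one => simp [r₂_prime_mul_of_not_dvd_of_mod_four_eq_one hp hp1 hpM]
  | more e ih₀ ih₁ =>
    have h := r₂_prime_sq_mul_add_of_mod_four_eq_one hp hp1 (p ^ e * M)
    rw [← mul_assoc, ← pow_add, ← mul_assoc, ← pow_succ', ih₀, ih₁, add_comm 2] at h
    linarith

theorem r₂_prime_pow_mul {p M : ℕ} (hp : p.Prime) (hpM : ¬p ∣ M) (e : ℕ) :
    (r₂ (p ^ e * M) : ℤ) = χ₄DivisorSum (p ^ e) * r₂ M := by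
  rw [χ₄DivisorSum_prime_pow hp]
  rcases hp.eq_two_or_odd' with rfl | hodd
  · rw [r₂_two_pow_mul, show χ₄ (2 : ℕ) = 0 from rfl, sum_range_succ']
    simp
  · obtain hp1 | hp3 : p % 4 = 1 ∨ p % 4 = 3 := by
      have := Nat.odd_iff.1 hodd; omega
    · rw [r₂_prime_pow_mul_of_mod_four_eq_one hp hp1 hpM, χ₄_nat_one_mod_four hp1]
      simp
    · rw [r₂_prime_pow_mul_of_mod_four_eq_three hp hp3 hpM, χ₄_nat_three_mod_four hp3,
        neg_one_geom_sum]
      split_ifs <;> simp_all [Nat.even_add_one]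

theorem r₂_zero : r₂ 0 = 1 := by
  simp [r₂]

theorem r₂_one : r₂ 1 = 4 := by
  have h : {z : ℤ[i] | z.norm.natAbs = 1} = ({⟨1, 0⟩, ⟨-1, 0⟩, ⟨0, 1⟩, ⟨0, -1⟩} : Finset ℤ[i]) := by
    ext z
    simp [natAbs_norm_eq_one_iff]
  rw [r₂, h, Set.ncard_coe_finset]
  decide

theorem r₂_eq_four_mul_χ₄DivisorSum {N : ℕ} (hN : N ≠ 0) : (r₂ N : ℤ) = 4 * χ₄DivisorSum N := by
  rw [isMultiplicative_χ₄DivisorSum.eq_mul_apply_one_of_prime_pow_mul (f := fun n => (r₂ n : ℤ))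
    (fun p e M hp hpM => r₂_prime_pow_mul hp hpM e) hN, r₂_one]
  push_cast
  ring

theorem hasSum_theta3 {q : ℝ} (hq0 : 0 ≤ q) (hq1 : q < 1) :
    HasSum (fun n : ℤ => q ^ (n.natAbs ^ 2)) (theta3 q) := by
  have hnat : Summable fun n : ℕ => q ^ (n ^ 2) :=
    (summable_geometric_of_lt_one hq0 hq1).of_nonneg_of_le (fun n => pow_nonneg hq0 _)
      fun n => pow_le_pow_of_le_one hq0 hq1.le (Nat.le_self_pow two_ne_zero n)
  have hint : Summable fun n : ℤ => q ^ (n.natAbs ^ 2) :=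
    summable_int_iff_summable_nat_and_neg.2 ⟨by simpa using hnat, by simpa using hnat⟩
  have htheta : theta3 q = ∑' n : ℤ, q ^ (n.natAbs ^ 2) := tsum_congr fun n => by
    rw [← Real.rpow_natCast q (n.natAbs ^ 2), Nat.cast_pow, Nat.cast_natAbs, Int.cast_abs, sq_abs]
  exact htheta ▸ hint.hasSum

theorem hasSum_theta3_sq {q : ℝ} (hq0 : 0 ≤ q) (hq1 : q < 1) :
    HasSum (fun z : ℤ[i] => q ^ z.norm.natAbs) (theta3 q ^ 2) := by
  set f : ℤ → ℝ := fun n => q ^ (n.natAbs ^ 2)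
  have h : HasSum f (theta3 q) := hasSum_theta3 hq0 hq1
  have hf : 0 ≤ f := fun n => pow_nonneg hq0 _
  have hprod := h.mul h (h.summable.mul_of_nonneg h.summable hf hf)
  rw [← sq] at hprod
  rw [← prodEquiv.hasSum_iff]
  refine hprod.congr_fun fun p => ?_
  rw [Function.comp_apply, natAbs_norm_eq, pow_add]
  simp only [f, sq]
  rfl

theorem hasSum_r₂_mul_pow {q : ℝ} (hq0 : 0 ≤ q) (hq1 : q < 1) :
    HasSum (fun N : ℕ => (r₂ N : ℝ) * q ^ N) (theta3 q ^ 2) := by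
  have h := (hasSum_theta3_sq hq0 hq1).ncard_fiber_nsmul (u := fun N => q ^ N)
  simp only [nsmul_eq_mul] at h
  exact h

theorem hasSum_χ₄DivisorSum_mul_pow {r : ℝ} (hr : |r| < 1) :
    HasSum (fun N : ℕ+ => (χ₄DivisorSum N : ℝ) * r ^ (N : ℕ))
      (∑' n : ℕ+, r ^ (n : ℕ) / (1 + r ^ (2 * n : ℕ))) := by
  have hχ₄ (d : ℕ) : ‖(χ₄ d : ℝ)‖ ≤ 1 := by
    rcases isQuadratic_χ₄ d with h | h | h <;> simp [h]
  have hL (n : ℕ+) : HasSum (fun d : ℕ+ => (χ₄ d : ℝ) * r ^ (n * d : ℕ))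
      (r ^ (n : ℕ) / (1 + r ^ (2 * n : ℕ))) := by
    have h := hasSum_χ₄_mul_pow (x := r ^ (n : ℕ)) (by
      simpa [abs_pow] using pow_lt_one₀ (abs_nonneg r) hr n.ne_zero)
    simpa only [← pow_mul, mul_comm 2] using h
  simpa [χ₄DivisorSum_apply] using hasSum_sum_divisors_mul_pow hχ₄ hr hL

theorem stmt7 (q : ℝ) (hq0 : 0 < q) (hq1 : q < 1) :
    theta3 q ^ 2 = 1 + 4 * ∑' n : ℕ, q ^ (n + 1) / (1 + q ^ (2 * (n + 1))) := by
  have hL := hasSum_r₂_mul_pow hq0.le hq1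
  have hR := hasSum_χ₄DivisorSum_mul_pow (abs_lt.2 ⟨by linarith, hq1⟩)
  calc theta3 q ^ 2 = ∑' N : ℕ, (r₂ N : ℝ) * q ^ N := hL.tsum_eq.symm
    _ = 1 + ∑' N : ℕ+, (r₂ N : ℝ) * q ^ (N : ℕ) := by
      rw [hL.summable.tsum_eq_zero_add, tsum_pnat_eq_tsum_succ (f := fun N => (r₂ N : ℝ) * q ^ N),
        r₂_zero, Nat.cast_one, pow_zero, one_mul]
    _ = 1 + 4 * ∑' N : ℕ+, (χ₄DivisorSum N : ℝ) * q ^ (N : ℕ) := by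
      rw [← tsum_mul_left]
      refine congrArg _ (tsum_congr fun N => ?_)
      rw [← mul_assoc]
      congr 1
      exact_mod_cast r₂_eq_four_mul_χ₄DivisorSum N.ne_zero
    _ = _ := by rw [hR.tsum_eq, tsum_pnat_eq_tsum_succ (f := fun n => q ^ n / (1 + q ^ (2 * n)))]
end

section
/- The integral −(π/32) ∫₀¹ x^{1/4} (1 − x^{1/2}) · log((1 − (1−x)^{1/2})/x^{1/2}) · dx/(x(1−x)) equals (√π Γ(1/4)² / (32√2)) · ₃F₂(1/2,1/2,1; 3/2, 3/4; 1) − (√π Γ(3/4)² / (8√2)) · ₃F₂(1/2,1/2,1; 3/2, 5/4; 1). -/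
/-!
Substituting `x = 1 - u²` turns the integrand into `-2 (K_{3/4} - K_{1/4})`, where
`K_s(u) = artanh u / u · (1 - u²)^(-s)`. Expanding `artanh u / u = ∑ u^(2n) / (2n + 1)` and
integrating termwise (the terms are nonnegative and `K_s` is integrable for `s < 1`), each term
is a Beta integral `B(n + 1/2, 1 - s) / 2`, and in Pochhammer form the series is
`Γ(1/2) Γ(1 - s) / (2 Γ(3/2 - s)) · ₃F₂(1/2, 1/2, 1; 3/2, 3/2 - s; 1)`. The constants then follow
from `Γ(1/2) = √π`, `Γ(5/4) = Γ(1/4) / 4` and the reflection formula `Γ(1/4) Γ(3/4) = π √2`.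
-/

/-- Pochhammer symbol (a)ₘ = a(a+1)⋯(a+m−1). -/
noncomputable def poch (a : ℝ) (m : ℕ) : ℝ := ∏ i ∈ Finset.range m, (a + i)

/-- Generalized hypergeometric series ₃F₂(a,b,c; e,f; z). -/
noncomputable def F32 (a b c e f z : ℝ) : ℝ :=
  ∑' n : ℕ, poch a n * poch b n * poch c n / (poch e n * poch f n * n.factorial) * z ^ n

open MeasureTheory Real Set

lemma poch_succ (a : ℝ) (n : ℕ) : poch a (n + 1) = poch a n * (a + n) :=
  Finset.prod_range_succ _ _

lemma poch_pos {a : ℝ} (ha : 0 < a) (n : ℕ) : 0 < poch a n :=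
  Finset.prod_pos fun _ _ => by positivity

lemma poch_one (n : ℕ) : poch 1 n = n.factorial := by
  induction n with
  | zero => simp [poch]
  | succ n ih => rw [poch_succ, ih]; push_cast [Nat.factorial_succ]; ring

lemma mul_poch_add_one (a : ℝ) (n : ℕ) : a * poch (a + 1) n = poch a n * (a + n) := by
  induction n with
  | zero => simp [poch]
  | succ n ih => rw [poch_succ, poch_succ, ← mul_assoc, ih]; push_cast; ring

lemma Gamma_add_natCast_eq_poch_mul {a : ℝ} (ha : 0 < a) (n : ℕ) :
    Gamma (a + n) = poch a n * Gamma a := by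
  induction n with
  | zero => simp [poch]
  | succ n ih =>
    rw [Nat.cast_succ, ← add_assoc, Gamma_add_one (by positivity), ih, poch_succ]
    ring

lemma integral_Ioo_rpow_mul_one_sub_rpow {a b : ℝ} (ha : 0 < a) (hb : 0 < b) :
    ∫ x in Ioo (0 : ℝ) 1, x ^ (a - 1) * (1 - x) ^ (b - 1) = Gamma a * Gamma b / Gamma (a + b) := by
  have hB := Complex.Gamma_mul_Gamma_eq_betaIntegral (s := a) (t := b) (by simpa) (by simpa)
  rw [← Complex.ofReal_add, Complex.Gamma_ofReal, Complex.Gamma_ofReal, Complex.Gamma_ofReal,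
    Complex.betaIntegral, intervalIntegral.integral_of_le zero_le_one,
    integral_Ioc_eq_integral_Ioo] at hB
  have hcast : ∫ x in Ioo (0 : ℝ) 1, (x : ℂ) ^ ((a : ℂ) - 1) * (1 - (x : ℂ)) ^ ((b : ℂ) - 1) =
      ((∫ x in Ioo (0 : ℝ) 1, x ^ (a - 1) * (1 - x) ^ (b - 1) : ℝ) : ℂ) := by
    rw [← integral_complex_ofReal]
    refine setIntegral_congr_fun measurableSet_Ioo fun x hx => ?_
    push_cast
    rw [Complex.ofReal_cpow hx.1.le, Complex.ofReal_cpow (sub_nonneg.2 hx.2.le)]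
    push_cast; ring_nf
  rw [hcast] at hB
  rw [eq_div_iff (Gamma_pos_of_pos (add_pos ha hb)).ne', mul_comm]
  exact_mod_cast hB.symm

section ChangeOfVariables

variable {E : Type*} [NormedAddCommGroup E] [NormedSpace ℝ E]

lemma image_sq_Ioo_zero_one : (fun u : ℝ => u ^ 2) '' Ioo 0 1 = Ioo 0 1 := by
  ext x
  constructor
  · rintro ⟨u, ⟨hu0, hu1⟩, rfl⟩
    exact ⟨by positivity, by nlinarith⟩
  · rintro ⟨hx0, hx1⟩
    exact ⟨√x, ⟨sqrt_pos.2 hx0, (sqrt_lt' one_pos).2 (by simpa using hx1)⟩, sq_sqrt hx0.le⟩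

lemma setIntegral_Ioo_comp_sq (f : ℝ → E) :
    ∫ x in Ioo (0 : ℝ) 1, f x = ∫ u in Ioo (0 : ℝ) 1, (2 * u) • f (u ^ 2) := by
  have hderiv : ∀ u ∈ Ioo (0 : ℝ) 1, HasDerivWithinAt (fun u => u ^ 2) (2 * u) (Ioo 0 1) u :=
    fun u _ => by simpa using (hasDerivAt_pow 2 u).hasDerivWithinAt
  have hinj : InjOn (fun u : ℝ => u ^ 2) (Ioo 0 1) :=
    fun a ha b hb h => (pow_left_inj₀ ha.1.le hb.1.le two_ne_zero).1 h
  rw [← image_sq_Ioo_zero_one,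
    integral_image_eq_integral_abs_deriv_smul measurableSet_Ioo hderiv hinj, image_sq_Ioo_zero_one]
  refine setIntegral_congr_fun measurableSet_Ioo fun u hu => ?_
  rw [abs_of_pos (by linarith [hu.1])]

lemma setIntegral_Ioo_comp_one_sub (f : ℝ → E) :
    ∫ x in Ioo (0 : ℝ) 1, f (1 - x) = ∫ x in Ioo (0 : ℝ) 1, f x := by
  simp only [← integral_Ioc_eq_integral_Ioo, ← intervalIntegral.integral_of_le zero_le_one]
  simp [intervalIntegral.integral_comp_sub_left f (1 : ℝ)]

lemma setIntegral_Ioo_comp_one_sub_sq (f : ℝ → E) :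
    ∫ x in Ioo (0 : ℝ) 1, f x = ∫ u in Ioo (0 : ℝ) 1, (2 * u) • f (1 - u ^ 2) := by
  rw [← setIntegral_Ioo_comp_one_sub, setIntegral_Ioo_comp_sq (fun x => f (1 - x))]

end ChangeOfVariables

lemma integral_Ioo_pow_mul_one_sub_sq_rpow {s : ℝ} (hs : s < 1) (n : ℕ) :
    ∫ u in Ioo (0 : ℝ) 1, u ^ (2 * n) * (1 - u ^ 2) ^ (-s) =
      Gamma (n + 1 / 2) * Gamma (1 - s) / (2 * Gamma (n + 3 / 2 - s)) := by
  have hB := integral_Ioo_rpow_mul_one_sub_rpow (a := n + 1 / 2) (b := 1 - s)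
    (by positivity) (by linarith)
  have hsub : ∫ u in Ioo (0 : ℝ) 1, (2 * u) • ((u ^ 2) ^ ((n : ℝ) + 1 / 2 - 1) *
      (1 - u ^ 2) ^ (1 - s - 1)) = 2 * ∫ u in Ioo (0 : ℝ) 1, u ^ (2 * n) * (1 - u ^ 2) ^ (-s) := by
    rw [← integral_const_mul]
    refine setIntegral_congr_fun measurableSet_Ioo fun u hu => ?_
    have hpow : (u ^ 2) ^ ((n : ℝ) + 1 / 2 - 1) * u = u ^ (2 * n) := by
      rw [← rpow_natCast u 2, ← rpow_mul hu.1.le, ← rpow_add_one hu.1.ne', ← rpow_natCast]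
      push_cast; ring_nf
    rw [smul_eq_mul, sub_sub_cancel_left, ← hpow]
    ring
  rw [setIntegral_Ioo_comp_sq, hsub, show (n : ℝ) + 1 / 2 + (1 - s) = n + 3 / 2 - s by ring] at hB
  rw [mul_comm (2 : ℝ), ← div_div, ← hB]
  ring

/-- `artanh u / u * (1 - u ^ 2) ^ (-s)`. -/
noncomputable def artanhKernel (s u : ℝ) : ℝ :=
  log ((1 + u) / (1 - u)) / (2 * u) * (1 - u ^ 2) ^ (-s)

lemma hasSum_artanhKernel (s : ℝ) {u : ℝ} (hu : u ∈ Ioo (0 : ℝ) 1) :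
    HasSum (fun n : ℕ => u ^ (2 * n) / (2 * n + 1) * (1 - u ^ 2) ^ (-s)) (artanhKernel s u) := by
  have h := (hasSum_log_sub_log_of_abs_lt_one (abs_lt.2 ⟨by linarith [hu.1], hu.2⟩)).mul_right
    ((1 - u ^ 2) ^ (-s) / (2 * u))
  have hterm : (fun n : ℕ => u ^ (2 * n) / (2 * n + 1) * (1 - u ^ 2) ^ (-s)) =
      fun n : ℕ => 2 * (1 / (2 * n + 1)) * u ^ (2 * n + 1) * ((1 - u ^ 2) ^ (-s) / (2 * u)) := by
    funext n
    have := hu.1.ne'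
    field_simp
    ring
  have hsum : artanhKernel s u = (log (1 + u) - log (1 - u)) * ((1 - u ^ 2) ^ (-s) / (2 * u)) := by
    rw [artanhKernel, log_div (by linarith [hu.1]) (by linarith [hu.2])]
    ring
  rwa [hterm, hsum]

lemma log_one_add_div_one_sub_div_le {u ε : ℝ} (hu : u ∈ Ioo (0 : ℝ) 1) (hε : 0 < ε) :
    log ((1 + u) / (1 - u)) / (2 * u) ≤ (2 + 1 / (2 * ε)) * (1 - u ^ 2) ^ (-ε) := by
  obtain ⟨hu0, hu1⟩ := hu
  have hq : 0 < 1 - u ^ 2 := by nlinarith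
  -- `log y ≤ y - 1` at `y = (1 + u) / (1 - u)` bounds the logarithm by `2u / (1 - u)`.
  have hsmall : log ((1 + u) / (1 - u)) / (2 * u) ≤ 1 + log ((1 + u) / (1 - u)) / 2 := by
    have h := log_le_sub_one_of_pos (x := (1 + u) / (1 - u)) (by apply div_pos <;> linarith)
    rw [div_sub_one (by linarith), le_div_iff₀ (by linarith)] at h
    rw [div_le_iff₀ (by linarith)]
    nlinarith
  have hlarge : log ((1 + u) / (1 - u)) ≤ 2 + (1 - u ^ 2) ^ (-ε) / ε := by
    have hsplit : log ((1 + u) / (1 - u)) = 2 * log (1 + u) + log ((1 - u ^ 2)⁻¹) := by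
      have : (1 + u) / (1 - u) = (1 + u) ^ 2 / (1 - u ^ 2) := by
        field_simp [show 1 - u ≠ 0 by linarith]; ring
      rw [this, log_inv, log_div (by positivity) hq.ne', log_pow]
      push_cast; ring
    have h2 : log (1 + u) ≤ 1 := by linarith [log_le_sub_one_of_pos (x := 1 + u) (by linarith)]
    have h3 := log_le_rpow_div (inv_nonneg.2 hq.le) hε
    rw [inv_rpow hq.le, ← rpow_neg hq.le] at h3
    linarith
  have hone : 1 ≤ (1 - u ^ 2) ^ (-ε) :=
    one_le_rpow_of_pos_of_le_one_of_nonpos hq (by nlinarith) (by linarith)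
  calc log ((1 + u) / (1 - u)) / (2 * u) ≤ 1 + log ((1 + u) / (1 - u)) / 2 := hsmall
    _ ≤ 2 + (1 - u ^ 2) ^ (-ε) / (2 * ε) := by
      have : (1 - u ^ 2) ^ (-ε) / (2 * ε) = (1 - u ^ 2) ^ (-ε) / ε / 2 := by ring
      linarith
    _ ≤ (2 + 1 / (2 * ε)) * (1 - u ^ 2) ^ (-ε) := by
      rw [add_mul, one_div_mul_eq_div]; gcongr; linarith

lemma integrableOn_one_sub_sq_rpow {r : ℝ} (hr : -1 < r) :
    IntegrableOn (fun u : ℝ => (1 - u ^ 2) ^ r) (Ioo 0 1) := by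
  have hmaj : IntegrableOn (fun u : ℝ => (1 - u) ^ r + 1) (Ioo 0 1) := by
    refine Integrable.add ?_ (integrableOn_const (by simp [volume_Ioo]))
    have h := (intervalIntegral.intervalIntegrable_rpow' hr (a := 0) (b := 1)).comp_sub_left 1
    simp only [sub_zero, sub_self] at h
    exact (intervalIntegrable_iff_integrableOn_Ioo_of_le zero_le_one).1 h.symm
  refine hmaj.mono' (ContinuousOn.aestronglyMeasurable ?_ measurableSet_Ioo) ?_
  · exact ContinuousOn.rpow_const (by fun_prop) fun u hu => Or.inl (by nlinarith [hu.1, hu.2])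
  · refine (ae_restrict_iff' measurableSet_Ioo).2 (Filter.Eventually.of_forall fun u hu => ?_)
    obtain ⟨hu0, hu1⟩ := hu
    have hq : 0 < 1 - u ^ 2 := by nlinarith
    rw [norm_of_nonneg (rpow_nonneg hq.le _)]
    rcases le_or_gt 0 r with hr0 | hr0
    · linarith [rpow_le_one hq.le (by nlinarith) hr0, rpow_nonneg (sub_nonneg.2 hu1.le) r]
    · have : (1 - u ^ 2) ^ r ≤ (1 - u) ^ r :=
        rpow_le_rpow_of_nonpos (by linarith) (by nlinarith) hr0.le
      linarith

lemma measurable_artanhKernel (s : ℝ) : Measurable (artanhKernel s) := by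
  unfold artanhKernel; fun_prop

lemma integrableOn_artanhKernel {s : ℝ} (hs : s < 1) : IntegrableOn (artanhKernel s) (Ioo 0 1) := by
  -- any `0 < ε < 1 - s` keeps the majorant `(1 - u²)^(-(ε + s))` integrable
  set ε := (1 - s) / 2
  have hε : 0 < ε := by simp only [ε]; linarith
  refine ((integrableOn_one_sub_sq_rpow (r := -(ε + s)) (by simp only [ε]; linarith)).const_mul
    (2 + 1 / (2 * ε))).mono' (measurable_artanhKernel s).aestronglyMeasurable ?_
  refine (ae_restrict_iff' measurableSet_Ioo).2 (Filter.Eventually.of_forall fun u hu => ?_)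
  have hu0 := hu.1
  have hq : 0 < 1 - u ^ 2 := by nlinarith [hu.2]
  have hK : 0 ≤ artanhKernel s u :=
    (hasSum_artanhKernel s hu).nonneg fun n => mul_nonneg (by positivity) (rpow_nonneg hq.le _)
  rw [norm_of_nonneg hK, artanhKernel, neg_add, rpow_add hq, ← mul_assoc]
  exact mul_le_mul_of_nonneg_right (log_one_add_div_one_sub_div_le hu hε) (rpow_nonneg hq.le _)

lemma hasSum_integral_artanhKernel {s : ℝ} (hs : s < 1) :
    HasSum (fun n : ℕ => ∫ u in Ioo (0 : ℝ) 1, u ^ (2 * n) / (2 * n + 1) * (1 - u ^ 2) ^ (-s))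
      (∫ u in Ioo (0 : ℝ) 1, artanhKernel s u) := by
  have hterms : ∀ᵐ u : ℝ ∂volume.restrict (Ioo (0 : ℝ) 1),
      HasSum (fun n : ℕ => u ^ (2 * n) / (2 * n + 1) * (1 - u ^ 2) ^ (-s)) (artanhKernel s u) :=
    (ae_restrict_iff' measurableSet_Ioo).2 (Filter.Eventually.of_forall fun u hu =>
      hasSum_artanhKernel s hu)
  -- The terms are nonnegative, so they dominate themselves and their sum is the kernel.
  refine hasSum_integral_of_dominated_convergence
    (fun n u => u ^ (2 * n) / (2 * n + 1) * (1 - u ^ 2) ^ (-s))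
    (fun n => by fun_prop) (fun n => ?_) (hterms.mono fun u hu => hu.summable) ?_ hterms
  · refine (ae_restrict_iff' measurableSet_Ioo).2 (Filter.Eventually.of_forall fun u hu => ?_)
    have hu0 := hu.1
    have hq : 0 ≤ 1 - u ^ 2 := by nlinarith [hu.2]
    exact (norm_of_nonneg (mul_nonneg (by positivity) (rpow_nonneg hq _))).le
  · exact (integrableOn_artanhKernel hs).congr (hterms.mono fun u hu => hu.tsum_eq.symm)

lemma poch_three_halves (n : ℕ) : poch (3 / 2) n = poch (1 / 2) n * (2 * n + 1) := by
  have h := mul_poch_add_one (1 / 2) n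
  norm_num at h
  linarith

lemma integral_Ioo_pow_div_mul_one_sub_sq_rpow {s : ℝ} (hs : s < 1) (n : ℕ) :
    ∫ u in Ioo (0 : ℝ) 1, u ^ (2 * n) / (2 * n + 1) * (1 - u ^ 2) ^ (-s) =
      Gamma (1 / 2) * Gamma (1 - s) / (2 * Gamma (3 / 2 - s)) *
        (poch (1 / 2) n * poch (1 / 2) n * poch 1 n /
          (poch (3 / 2) n * poch (3 / 2 - s) n * n.factorial) * 1 ^ n) := by
  simp_rw [div_mul_eq_mul_div, integral_div, integral_Ioo_pow_mul_one_sub_sq_rpow hs]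
  rw [add_comm (n : ℝ), Gamma_add_natCast_eq_poch_mul one_half_pos,
    show (n : ℝ) + 3 / 2 - s = 3 / 2 - s + n by ring, Gamma_add_natCast_eq_poch_mul (by linarith),
    poch_one, poch_three_halves, one_pow]
  have := (poch_pos one_half_pos n).ne'
  have := (poch_pos (by linarith : 0 < 3 / 2 - s) n).ne'
  have := (Gamma_pos_of_pos (by linarith : 0 < 3 / 2 - s)).ne'
  field_simp

theorem integral_artanhKernel {s : ℝ} (hs : s < 1) :
    ∫ u in Ioo (0 : ℝ) 1, artanhKernel s u =
      Gamma (1 / 2) * Gamma (1 - s) / (2 * Gamma (3 / 2 - s)) *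
        F32 (1 / 2) (1 / 2) 1 (3 / 2) (3 / 2 - s) 1 := by
  have h := hasSum_integral_artanhKernel hs
  simp_rw [integral_Ioo_pow_div_mul_one_sub_sq_rpow hs] at h
  rw [F32, ← tsum_mul_left, h.tsum_eq]

lemma log_one_sub_div_sqrt_one_sub_sq {u : ℝ} (hu : u ∈ Ioo (0 : ℝ) 1) :
    log ((1 - (u ^ 2) ^ (1 / 2 : ℝ)) / (1 - u ^ 2) ^ (1 / 2 : ℝ)) =
      -(1 / 2) * log ((1 + u) / (1 - u)) := by
  obtain ⟨hu0, hu1⟩ := hu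
  have hd : 0 < 1 - u := by linarith
  have hn : 0 < 1 + u := by linarith
  rw [← sqrt_eq_rpow, ← sqrt_eq_rpow, sqrt_sq hu0.le, show 1 - u ^ 2 = (1 - u) * (1 + u) by ring,
    sqrt_mul hd.le, log_div hd.ne' (by positivity), log_mul (by positivity) (by positivity),
    log_sqrt hd.le, log_sqrt hn.le, log_div hn.ne' hd.ne']
  ring

lemma two_mul_integrand_one_sub_sq {u : ℝ} (hu : u ∈ Ioo (0 : ℝ) 1) :
    2 * u * ((1 - u ^ 2) ^ (1 / 4 : ℝ) * (1 - (1 - u ^ 2) ^ (1 / 2 : ℝ)) *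
        log ((1 - (1 - (1 - u ^ 2)) ^ (1 / 2 : ℝ)) / (1 - u ^ 2) ^ (1 / 2 : ℝ)) /
          ((1 - u ^ 2) * (1 - (1 - u ^ 2)))) =
      -2 * (artanhKernel (3 / 4) u - artanhKernel (1 / 4) u) := by
  have hu0 := hu.1
  have hx : 0 < 1 - u ^ 2 := by nlinarith [hu.2]
  have hpow : (1 - u ^ 2) ^ (1 / 4 : ℝ) * (1 - (1 - u ^ 2) ^ (1 / 2 : ℝ)) =
      ((1 - u ^ 2) ^ (-(3 / 4) : ℝ) - (1 - u ^ 2) ^ (-(1 / 4) : ℝ)) * (1 - u ^ 2) := by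
    rw [sub_mul, ← rpow_add_one hx.ne', ← rpow_add_one hx.ne', mul_sub, ← rpow_add hx]
    norm_num
  rw [sub_sub_cancel, log_one_sub_div_sqrt_one_sub_sq hu, hpow, artanhKernel, artanhKernel]
  field_simp

lemma integral_zero_one_eq_sub_integral_artanhKernel :
    ∫ x in (0 : ℝ)..1, x ^ ((1 : ℝ) / 4) * (1 - x ^ ((1 : ℝ) / 2)) *
        log ((1 - (1 - x) ^ ((1 : ℝ) / 2)) / x ^ ((1 : ℝ) / 2)) / (x * (1 - x)) =
      -2 * ((∫ u in Ioo (0 : ℝ) 1, artanhKernel (3 / 4) u) -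
        ∫ u in Ioo (0 : ℝ) 1, artanhKernel (1 / 4) u) := by
  rw [intervalIntegral.integral_of_le zero_le_one, integral_Ioc_eq_integral_Ioo,
    setIntegral_Ioo_comp_one_sub_sq, ← integral_sub (integrableOn_artanhKernel (by norm_num))
      (integrableOn_artanhKernel (by norm_num)), ← integral_const_mul]
  refine setIntegral_congr_fun measurableSet_Ioo fun u hu => ?_
  rw [smul_eq_mul, ← two_mul_integrand_one_sub_sq hu]

lemma Gamma_one_quarter_mul_Gamma_three_quarters : Gamma (1 / 4) * Gamma (3 / 4) = π * √2 := by
  have h := Gamma_mul_Gamma_one_sub (1 / 4)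
  rw [show (1 : ℝ) - 1 / 4 = 3 / 4 by norm_num, show π * (1 / 4) = π / 4 by ring,
    sin_pi_div_four] at h
  rw [h]
  field_simp
  rw [sq_sqrt zero_le_two]

theorem stmt17 :
    -(Real.pi / 32) * ∫ x in (0:ℝ)..1,
        x ^ ((1 : ℝ)/4) * (1 - x ^ ((1 : ℝ)/2)) *
          Real.log ((1 - (1 - x) ^ ((1 : ℝ)/2)) / x ^ ((1 : ℝ)/2)) / (x * (1 - x)) =
      Real.sqrt Real.pi * Real.Gamma (1/4) ^ 2 / (32 * Real.sqrt 2) *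
          F32 (1/2) (1/2) 1 (3/2) (3/4) 1 -
        Real.sqrt Real.pi * Real.Gamma (3/4) ^ 2 / (8 * Real.sqrt 2) *
          F32 (1/2) (1/2) 1 (3/2) (5/4) 1 := by
  rw [integral_zero_one_eq_sub_integral_artanhKernel, integral_artanhKernel (by norm_num),
    integral_artanhKernel (by norm_num)]
  have h54 : Gamma (5 / 4) = Gamma (1 / 4) / 4 := by
    rw [show (5 / 4 : ℝ) = 1 / 4 + 1 by norm_num, Gamma_add_one (by norm_num)]
    ring
  norm_num only [Gamma_one_half_eq, h54]
  have hG := Gamma_one_quarter_mul_Gamma_three_quarters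
  have := (Gamma_pos_of_pos (by norm_num : (0 : ℝ) < 1 / 4)).ne'
  have := (Gamma_pos_of_pos (by norm_num : (0 : ℝ) < 3 / 4)).ne'
  field_simp
  linear_combination (32 * F32 (1 / 2) (1 / 2) 1 (3 / 2) (5 / 4) 1 * Gamma (3 / 4) ^ 2 -
    8 * F32 (1 / 2) (1 / 2) 1 (3 / 2) (3 / 4) 1 * Gamma (1 / 4) ^ 2) * hG
end
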